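/- arXiv:1812.08026 — 9 statements merged into one kernel-verified Lean document; each statement's English description precedes it below -/
import Mathlib

section
/- Let α > 1, c > 0, and let (B_j) be a non-decreasing positive sequence with B_k^α ≥ c · Σ_{j=1}^k B_j for all k ≥ 1. Then B_k ≥ ((α−1)/α · c · k)^{1/(α−1)} for all k ≥ 1. -/
/-!
Put `p = 1/(α-1)` and `t = (α-1)/α · c`, so that `c = (p+1) t` and `B^α = B · B^(1/p)`; we show
`(t k)^p ≤ B k` by strong induction. The induction hypothesis and the integral comparison
`∑_{j=1}^m j^p ≥ ∫_0^m x^p dx = m^(p+1)/(p+1)` turn the hypothesis at `m + 1` into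
`(t m)^(p+1) + (p+1) t x ≤ x · x^(1/p)` for `x = B (m+1)`. If `x < (t m + t)^p`, then
`x^(1/p) < t m + t`, hence `(t m)^(p+1) < x (t m - p t) < (t m + t)^p (t m - p t)`, which contradicts
the weighted AM–GM inequality `(M + t)^(p/(p+1)) (M - p t)^(1/(p+1)) ≤ M`.
-/

open Real Finset

theorem rpow_add_one_div_le_sum_Icc_rpow {p : ℝ} (hp : 0 ≤ p) (m : ℕ) :
    (m : ℝ) ^ (p + 1) / (p + 1) ≤ ∑ j ∈ Icc 1 m, (j : ℝ) ^ p := by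
  have hmono : MonotoneOn (fun x : ℝ ↦ x ^ p) (Set.Icc 0 (0 + m)) := fun x hx _ _ hxy ↦
    rpow_le_rpow hx.1 hxy hp
  have h := hmono.integral_le_sum
  rw [integral_rpow (by left; linarith), zero_rpow (by positivity), sub_zero, zero_add] at h
  convert h using 1
  rw [range_eq_Ico, sum_Ico_add' (fun j : ℕ ↦ (0 + (j : ℝ)) ^ p) 0 m 1, Ico_add_one_right_eq_Icc]
  simp

theorem rpow_mul_sub_le_rpow_add_one {p M t : ℝ} (hp : 0 ≤ p) (hM : 0 ≤ M) (ht : 0 ≤ t) :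
    (M + t) ^ p * (M - p * t) ≤ M ^ (p + 1) := by
  rcases lt_or_ge (M - p * t) 0 with hneg | hnonneg
  · exact (mul_nonpos_of_nonneg_of_nonpos (by positivity) hneg.le).trans (by positivity)
  have hp1 : 0 < p + 1 := by linarith
  have amgm := geom_mean_le_arith_mean2_weighted (p₁ := M + t) (p₂ := M - p * t)
    (div_nonneg hp hp1.le) (inv_nonneg.2 hp1.le) (by positivity) hnonneg (by field_simp)
  have hmean : p / (p + 1) * (M + t) + (p + 1)⁻¹ * (M - p * t) = M := by field_simp; ring
  rw [hmean] at amgm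
  calc (M + t) ^ p * (M - p * t)
      = ((M + t) ^ (p / (p + 1)) * (M - p * t) ^ (p + 1)⁻¹) ^ (p + 1) := by
        rw [mul_rpow (by positivity) (by positivity), ← rpow_mul (by positivity),
          ← rpow_mul hnonneg, div_mul_cancel₀ _ hp1.ne', inv_mul_cancel₀ hp1.ne', rpow_one]
    _ ≤ M ^ (p + 1) := by gcongr

theorem rpow_add_le_of_rpow_add_mul_le {p M t x : ℝ} (hp : 0 < p) (hM : 0 ≤ M) (ht : 0 ≤ t)
    (hx : 0 < x) (h : M ^ (p + 1) + (p + 1) * t * x ≤ x * x ^ p⁻¹) : (M + t) ^ p ≤ x := by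
  by_contra! hlt
  have hroot : x ^ p⁻¹ < M + t := by
    calc x ^ p⁻¹ < ((M + t) ^ p) ^ p⁻¹ := by gcongr
      _ = M + t := by rw [← rpow_mul (by positivity), mul_inv_cancel₀ hp.ne', rpow_one]
  have hlow : M ^ (p + 1) < x * (M - p * t) := by nlinarith
  have hpos : 0 < M - p * t := by
    by_contra! hle
    nlinarith [rpow_nonneg hM (p + 1)]
  nlinarith [rpow_mul_sub_le_rpow_add_one hp.le hM ht]

theorem rpow_mul_natCast_le_mul_sum {p t : ℝ} (hp : 0 ≤ p) (ht : 0 ≤ t) {B : ℕ → ℝ} {m : ℕ}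
    (hB : ∀ j ∈ Icc 1 m, (t * j) ^ p ≤ B j) :
    (t * m) ^ (p + 1) ≤ (p + 1) * t * ∑ j ∈ Icc 1 m, B j := by
  have hp1 : 0 < p + 1 := by linarith
  calc (t * m) ^ (p + 1) = (p + 1) * t * (t ^ p * ((m : ℝ) ^ (p + 1) / (p + 1))) := by
        rw [mul_rpow ht (by positivity), rpow_add_one' ht hp1.ne']
        field_simp
    _ ≤ (p + 1) * t * (t ^ p * ∑ j ∈ Icc 1 m, (j : ℝ) ^ p) := by
        gcongr
        exact rpow_add_one_div_le_sum_Icc_rpow hp m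
    _ = (p + 1) * t * ∑ j ∈ Icc 1 m, (t * j) ^ p := by
        simp_rw [mul_sum, mul_rpow ht (Nat.cast_nonneg _)]
    _ ≤ (p + 1) * t * ∑ j ∈ Icc 1 m, B j := by
        gcongr with j hj
        exact hB j hj

theorem rpow_mul_natCast_le_of_mul_sum_le {p t : ℝ} (hp : 0 < p) (ht : 0 ≤ t) (B : ℕ → ℝ)
    (hpos : ∀ k, 1 ≤ k → 0 < B k)
    (hrec : ∀ k, 1 ≤ k → (p + 1) * t * ∑ j ∈ Icc 1 k, B j ≤ B k * B k ^ p⁻¹) :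
    ∀ k, 1 ≤ k → (t * k) ^ p ≤ B k := by
  intro k
  induction k using Nat.strong_induction_on with
  | _ k ih =>
    intro hk
    obtain ⟨m, rfl⟩ : ∃ m, k = m + 1 := ⟨k - 1, by omega⟩
    have hprev : (t * m) ^ (p + 1) ≤ (p + 1) * t * ∑ j ∈ Icc 1 m, B j :=
      rpow_mul_natCast_le_mul_sum hp.le ht fun j hj ↦
        ih j (Nat.lt_succ_of_le (mem_Icc.1 hj).2) (mem_Icc.1 hj).1
    have hcur := hrec (m + 1) hk
    rw [sum_Icc_succ_top hk, mul_add] at hcur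
    have := rpow_add_le_of_rpow_add_mul_le (M := t * m) hp (by positivity) ht (hpos (m + 1) hk)
      (by linarith)
    rwa [Nat.cast_succ, mul_add_one]

theorem recursion_lemma_general (α c : ℝ) (hα : 1 < α) (hc : 0 < c) (B : ℕ → ℝ)
    (hpos : ∀ k, 1 ≤ k → 0 < B k)
    (hrec : ∀ k, 1 ≤ k → (B k) ^ α ≥ c * ∑ j ∈ Finset.Icc 1 k, B j) :
    ∀ k : ℕ, 1 ≤ k → B k ≥ ((α - 1) / α * c * k) ^ (1 / (α - 1)) := by
  have hα0 : 0 < α - 1 := by linarith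
  have hc_eq : (1 / (α - 1) + 1) * ((α - 1) / α * c) = c := by
    field_simp
    ring
  refine rpow_mul_natCast_le_of_mul_sum_le (by positivity) (by positivity) B hpos fun k hk ↦ ?_
  rw [hc_eq, one_div, inv_inv, ← rpow_one_add' (hpos k hk).le (by linarith), add_sub_cancel]
  exact hrec k hk

/-- A positive non-decreasing sequence with `B k ^ α ≥ c * ∑_{j=1}^k B j` satisfies
`B k ≥ ((α-1)/α * c * k)^(1/(α-1))`. -/
theorem recursion_lemma (α c : ℝ) (hα : 1 < α) (hc : 0 < c) (B : ℕ → ℝ)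
    (hpos : ∀ k, 1 ≤ k → 0 < B k)
    (hmono : ∀ j k, 1 ≤ j → j ≤ k → B j ≤ B k)
    (hrec : ∀ k, 1 ≤ k → (B k) ^ α ≥ c * ∑ j ∈ Finset.Icc 1 k, B j) :
    ∀ k : ℕ, 1 ≤ k → B k ≥ ((α - 1) / α * c * k) ^ (1 / (α - 1)) :=
  recursion_lemma_general α c hα hc B hpos hrec
end

section
/- Let f : ℝ^d → ℝ be convex differentiable. With ψ_k, x_k, A_k as in the estimate sequence, for any x, z_k, y_{k+1}: ψ_{k+1}(x) − A_{k+1} f(y_{k+1}) − (ψ_k(x_k) − A_k f(z_k)) ≥ A_{k+1} ⟨∇f(y_{k+1}), (a_{k+1}/A_{k+1}) x + (A_k/A_{k+1}) z_k − y_{k+1}⟩ + ‖x − x_k‖²/2. -/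
open scoped RealInnerProductSpace

/-!
`ψ_k` is a quadratic with identity Hessian, so it equals `ψ_k(x_k) + ‖x - x_k‖² / 2` with its
minimizer `x_k = -∑ aᵢ ∇f(yᵢ)`. Adding the new linearization at `y_{k+1}` and splitting
`A_{k+1} = A_k + a_{k+1}`, the claim reduces to `A_k` times the tangent-plane inequality
`f(y_{k+1}) + ⟪∇f(y_{k+1}), z_k - y_{k+1}⟫ ≤ f(z_k)` of the convex function `f`.
-/

section Tangent

variable {E : Type*} [NormedAddCommGroup E]

theorem ConvexOn.apply_add_fderiv_le [NormedSpace ℝ E] {f : E → ℝ} {f' : E →L[ℝ] ℝ}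
    {s : Set E} (hf : ConvexOn ℝ s f) {x y : E} (hx : x ∈ s) (hy : y ∈ s)
    (hf' : HasFDerivAt f f' x) : f x + f' (y - x) ≤ f y := by
  let ℓ : ℝ →ᵃ[ℝ] E := AffineMap.lineMap x y
  have hline : ConvexOn ℝ (ℓ ⁻¹' s) (f ∘ ℓ) := hf.comp_affineMap ℓ
  have hderiv : HasDerivAt (f ∘ ℓ) (f' (y - x)) 0 := by
    have hf'0 : HasFDerivAt f f' (AffineMap.lineMap x y (0 : ℝ)) := by simpa using hf'
    simpa using hf'0.comp_hasDerivAt (0 : ℝ) AffineMap.hasDerivAt_lineMap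
  have hslope := hline.le_slope_of_hasDerivAt (by simpa [ℓ]) (by simpa [ℓ]) one_pos hderiv
  simp only [slope, ℓ, Function.comp_apply, AffineMap.lineMap_apply_zero,
    AffineMap.lineMap_apply_one, sub_zero, inv_one, one_smul, vsub_eq_sub] at hslope
  linarith

theorem ConvexOn.apply_add_inner_gradient_le [InnerProductSpace ℝ E] [CompleteSpace E]
    {f : E → ℝ} {s : Set E} (hf : ConvexOn ℝ s f) {x y : E} (hx : x ∈ s) (hy : y ∈ s)
    (hd : DifferentiableAt ℝ f x) : f x + ⟪gradient f x, y - x⟫ ≤ f y := by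
  simpa using hf.apply_add_fderiv_le hx hy hd.hasGradientAt.hasFDerivAt

end Tangent

section QuadraticModel

variable {E ι : Type*} [NormedAddCommGroup E] [InnerProductSpace ℝ E]

theorem sum_mul_add_inner_sub_eq (s : Finset ι) (a c : ι → ℝ) (g y : ι → E) (x w : E) :
    ∑ i ∈ s, a i * (c i + ⟪g i, x - y i⟫) =
      ∑ i ∈ s, a i * (c i + ⟪g i, w - y i⟫) + ⟪∑ i ∈ s, a i • g i, x - w⟫ := by
  rw [sum_inner, ← Finset.sum_add_distrib]
  refine Finset.sum_congr rfl fun i _ => ?_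
  rw [real_inner_smul_left, show x - y i = (w - y i) + (x - w) by abel, inner_add_right]
  ring

theorem half_norm_sq_add_sum_eq_of_eq_neg_sum (s : Finset ι) (a c : ι → ℝ) (g y : ι → E)
    {m : E} (hm : m = -∑ i ∈ s, a i • g i) (x : E) :
    ‖x‖ ^ 2 / 2 + ∑ i ∈ s, a i * (c i + ⟪g i, x - y i⟫) =
      ‖m‖ ^ 2 / 2 + ∑ i ∈ s, a i * (c i + ⟪g i, m - y i⟫) + ‖x - m‖ ^ 2 / 2 := by
  rw [sum_mul_add_inner_sub_eq s a c g y x m, ← neg_neg (∑ i ∈ s, a i • g i), ← hm,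
    inner_neg_left]
  have hexpand := norm_add_sq_real m (x - m)
  rw [add_sub_cancel] at hexpand
  linarith

end QuadraticModel

/-- The key induction step for the estimate sequence. -/
theorem estimate_sequence_induction_step (d : ℕ) (f : EuclideanSpace ℝ (Fin d) → ℝ)
    (hconv : ConvexOn ℝ Set.univ f) (hdiff : Differentiable ℝ f)
    (a : ℕ → ℝ) (ha : ∀ i, 1 ≤ i → 0 < a i) (y : ℕ → EuclideanSpace ℝ (Fin d))
    (A : ℕ → ℝ) (hA : ∀ n, A n = ∑ i ∈ Finset.Icc 1 n, a i)
    (ψ : ℕ → EuclideanSpace ℝ (Fin d) → ℝ)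
    (hψ : ∀ n x, ψ n x = ‖x‖ ^ 2 / 2 +
      ∑ i ∈ Finset.Icc 1 n, a i * (f (y i) + ⟪gradient f (y i), x - y i⟫))
    (xk : ℕ → EuclideanSpace ℝ (Fin d))
    (hxk : ∀ n, xk n = -∑ i ∈ Finset.Icc 1 n, a i • gradient f (y i))
    (k : ℕ) (zk : EuclideanSpace ℝ (Fin d)) :
    ∀ x : EuclideanSpace ℝ (Fin d),
      ψ (k + 1) x - A (k + 1) * f (y (k + 1)) - (ψ k (xk k) - A k * f zk) ≥
        A (k + 1) * ⟪gradient f (y (k + 1)),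
            (a (k + 1) / A (k + 1)) • x + (A k / A (k + 1)) • zk - y (k + 1)⟫ +
          ‖x - xk k‖ ^ 2 / 2 := by
  intro x
  set g := gradient f (y (k + 1))
  have hsucc := fun u : ℕ → ℝ => Finset.sum_Icc_succ_top (Nat.le_add_left 1 k) u
  have hA_succ : A (k + 1) = A k + a (k + 1) := by rw [hA, hA, hsucc]
  have hA_nonneg : 0 ≤ A k := by
    rw [hA]
    exact Finset.sum_nonneg fun i hi => (ha i (Finset.mem_Icc.mp hi).1).le
  have hA_succ_ne : A (k + 1) ≠ 0 := by linarith [ha (k + 1) (Nat.le_add_left 1 k)]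
  have hψ_succ : ψ (k + 1) x = ψ k x + a (k + 1) * (f (y (k + 1)) + ⟪g, x - y (k + 1)⟫) := by
    rw [hψ, hψ, hsucc, add_assoc]
  have hψ_min : ψ k x = ψ k (xk k) + ‖x - xk k‖ ^ 2 / 2 := by
    rw [hψ, hψ]
    exact half_norm_sq_add_sum_eq_of_eq_neg_sum _ _ _ _ _ (hxk k) x
  have hrhs : A (k + 1) * ⟪g, (a (k + 1) / A (k + 1)) • x + (A k / A (k + 1)) • zk - y (k + 1)⟫
      = a (k + 1) * ⟪g, x - y (k + 1)⟫ + A k * ⟪g, zk - y (k + 1)⟫ := by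
    simp only [inner_sub_right, inner_add_right, real_inner_smul_right]
    field_simp
    rw [hA_succ]
    ring
  have htangent : f (y (k + 1)) + ⟪g, zk - y (k + 1)⟫ ≤ f zk :=
    hconv.apply_add_inner_gradient_le (Set.mem_univ _) (Set.mem_univ _) (hdiff _)
  rw [ge_iff_le, hrhs, hψ_succ, hψ_min, hA_succ]
  nlinarith [mul_le_mul_of_nonneg_left htangent hA_nonneg]
end

section
/- Suppose a sequence satisfies the Monteiro–Svaiter condition ‖y_{k+1} − (x̃_k − λ_{k+1}∇f(y_{k+1}))‖ ≤ ‖y_{k+1} − x̃_k‖ for all k, with x_k = −Σ_{i≤k} a_i ∇f(y_i), λ_k A_k = a_k², x̃_k = (a_{k+1}/A_{k+1}) x_k + (A_k/A_{k+1}) y_k, and f convex differentiable. Then for every x ∈ ℝ^d and k ≥ 1, f(y_k) − f(x) ≤ 2‖x‖² / (Σ_{i=1}^k sqrt(λ_i))². -/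
/-!
The estimate-sequence potential `Φ k = A k * (f (y k) - f w) + ‖x k - w‖² / 2` is nonincreasing.
Squaring the Monteiro–Svaiter condition gives `⟪y' - x̃, g⟫ ≤ -(λ/2) ‖g‖²` for `g = ∇f y'`;
multiplied by `A' = A + a` and using `λ A' = a²`, this absorbs the term `a² ‖g‖² / 2` produced by
the step `x' = x - a g`, once the gradient inequalities at `y'` towards `w` and `y` are weighted
by `a` and `A`. Hence `A k (f (y k) - f w) ≤ ‖w‖² / 2`. On the other hand
`√λ k = a k / √(A k) ≤ 2 (√(A k) - √(A (k - 1)))`, which telescopes to `∑ √λ i ≤ 2 √(A k)`.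
-/

open scoped RealInnerProductSpace
open Finset

theorem ConvexOn.hasFDerivAt_le_sub {E : Type*} [NormedAddCommGroup E] [NormedSpace ℝ E]
    {f : E → ℝ} {f' : E →L[ℝ] ℝ} {u : E} (hf : ConvexOn ℝ Set.univ f)
    (hf' : HasFDerivAt f f' u) (v : E) : f' (v - u) ≤ f v - f u := by
  let L : ℝ →ᵃ[ℝ] E := AffineMap.lineMap u v
  have hline : HasDerivAt (f ∘ L) (f' (v - u)) 0 :=
    HasFDerivAt.comp_hasDerivAt (l := f) 0 (by simpa [L] using hf') AffineMap.hasDerivAt_lineMap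
  have hconv : ConvexOn ℝ Set.univ (f ∘ L) := by
    simpa using hf.comp_affineMap L
  simpa [L, slope_def_field] using
    hconv.le_slope_of_hasDerivAt (Set.mem_univ 0) (Set.mem_univ 1) one_pos hline

theorem ConvexOn.inner_gradient_le_sub {F : Type*} [NormedAddCommGroup F] [InnerProductSpace ℝ F]
    [CompleteSpace F] {f : F → ℝ} {u : F} (hf : ConvexOn ℝ Set.univ f)
    (hdiff : DifferentiableAt ℝ f u) (v : F) : ⟪v - u, gradient f u⟫ ≤ f v - f u := by
  simpa [real_inner_comm] using hf.hasFDerivAt_le_sub hdiff.hasGradientAt.hasFDerivAt v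

theorem inner_le_of_norm_add_smul_le {E : Type*} [NormedAddCommGroup E] [InnerProductSpace ℝ E]
    {p g : E} {t : ℝ} (ht : 0 < t) (h : ‖p + t • g‖ ≤ ‖p‖) :
    ⟪p, g⟫ ≤ -(t / 2) * ‖g‖ ^ 2 := by
  have hsq := pow_le_pow_left₀ (norm_nonneg _) h 2
  rw [norm_add_sq_real, norm_smul, Real.norm_eq_abs, abs_of_pos ht, mul_pow,
    inner_smul_right] at hsq
  nlinarith

namespace MonteiroSvaiter

theorem sqrt_le_two_mul_sub_sqrt {A a t : ℝ} (hA : 0 ≤ A) (ha : 0 < a)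
    (ht : t * (A + a) = a ^ 2) :
    √t ≤ 2 * (√(A + a) - √A) := by
  have hs : 0 < √(A + a) := Real.sqrt_pos.mpr (by linarith)
  have hsq : (√(A + a)) ^ 2 = A + a := Real.sq_sqrt (by linarith)
  have ht' : t = (a / √(A + a)) ^ 2 := by
    rw [div_pow, hsq, eq_div_iff (by positivity), ht]
  rw [ht', Real.sqrt_sq (by positivity), div_le_iff₀ hs]
  nlinarith [Real.sq_sqrt hA, sq_nonneg (√(A + a) - √A)]

theorem sum_Icc_one_nonneg {a : ℕ → ℝ} (ha : ∀ i, 1 ≤ i → 0 < a i) (k : ℕ) :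
    0 ≤ ∑ i ∈ Icc 1 k, a i :=
  sum_nonneg fun i hi => (ha i (mem_Icc.mp hi).1).le

theorem sq_sum_sqrt_le {a t : ℕ → ℝ} (ha : ∀ i, 1 ≤ i → 0 < a i)
    (ht : ∀ i, 1 ≤ i → t i * ∑ j ∈ Icc 1 i, a j = a i ^ 2) (k : ℕ) :
    (∑ i ∈ Icc 1 k, √(t i)) ^ 2 ≤ 4 * ∑ i ∈ Icc 1 k, a i := by
  have hsum : ∀ k, ∑ i ∈ Icc 1 k, √(t i) ≤ 2 * √(∑ i ∈ Icc 1 k, a i) := by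
    intro k
    induction k with
    | zero => simp
    | succ n ih =>
      have hstep := sqrt_le_two_mul_sub_sqrt (sum_Icc_one_nonneg ha n) (ha (n + 1) (by omega))
        (sum_Icc_succ_top (by omega : 1 ≤ n + 1) a ▸ ht (n + 1) (by omega))
      rw [sum_Icc_succ_top (by omega), sum_Icc_succ_top (by omega)]
      linarith
  calc (∑ i ∈ Icc 1 k, √(t i)) ^ 2 ≤ (2 * √(∑ i ∈ Icc 1 k, a i)) ^ 2 :=
        pow_le_pow_left₀ (sum_nonneg fun _ _ => Real.sqrt_nonneg _) (hsum k) 2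
    _ = 4 * ∑ i ∈ Icc 1 k, a i := by
      rw [mul_pow, Real.sq_sqrt (sum_Icc_one_nonneg ha k)]; norm_num

section

variable {E : Type*} [NormedAddCommGroup E] [InnerProductSpace ℝ E] [CompleteSpace E]

noncomputable def potential (f : E → ℝ) (w : E) (A : ℝ) (x y : E) : ℝ :=
  A * (f y - f w) + ‖x - w‖ ^ 2 / 2

theorem potential_step_le {f : E → ℝ} (hf : ConvexOn ℝ Set.univ f) {y' : E}
    (hdiff : DifferentiableAt ℝ f y') (w x y xt : E) {A a t : ℝ} (hA : 0 ≤ A) (ha : 0 < a)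
    (ht : t * (A + a) = a ^ 2) (hxt : xt = (a / (A + a)) • x + (A / (A + a)) • y)
    (hMS : ‖y' - (xt - t • gradient f y')‖ ≤ ‖y' - xt‖) :
    potential f w (A + a) (x - a • gradient f y') y' ≤ potential f w A x y := by
  set g := gradient f y'
  have hA' : 0 < A + a := by linarith
  have ht_pos : 0 < t := pos_of_mul_pos_left (ht ▸ pow_pos ha 2) hA'.le
  have hms : ⟪y' - xt, g⟫ ≤ -(t / 2) * ‖g‖ ^ 2 :=
    inner_le_of_norm_add_smul_le ht_pos (by rwa [sub_sub_eq_add_sub, add_sub_right_comm] at hMS)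
  have hms_scaled :
      (A + a) * ⟪y', g⟫ - a * ⟪x, g⟫ - A * ⟪y, g⟫ ≤ -(a ^ 2 / 2) * ‖g‖ ^ 2 := by
    have h := mul_le_mul_of_nonneg_left hms hA'.le
    rw [hxt, inner_sub_left, inner_add_left, real_inner_smul_left, real_inner_smul_left] at h
    rw [← ht]
    field_simp at h ⊢
    linarith
  have hcw : ⟪w, g⟫ - ⟪y', g⟫ ≤ f w - f y' := by
    simpa only [inner_sub_left] using hf.inner_gradient_le_sub hdiff w
  have hcy : ⟪y, g⟫ - ⟪y', g⟫ ≤ f y - f y' := by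
    simpa only [inner_sub_left] using hf.inner_gradient_le_sub hdiff y
  have hnorm :
      ‖x - a • g - w‖ ^ 2 = ‖x - w‖ ^ 2 - 2 * a * (⟪x, g⟫ - ⟪w, g⟫) + a ^ 2 * ‖g‖ ^ 2 := by
    rw [sub_right_comm, norm_sub_sq_real, inner_smul_right, inner_sub_left, norm_smul,
      Real.norm_eq_abs, abs_of_pos ha, mul_pow]
    ring
  simp only [potential, hnorm]
  linarith [mul_le_mul_of_nonneg_left hcw ha.le, mul_le_mul_of_nonneg_left hcy hA]

theorem potential_le {f : E → ℝ} (hconv : ConvexOn ℝ Set.univ f) (hdiff : Differentiable ℝ f)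
    {lam a A : ℕ → ℝ} (ha : ∀ k, 1 ≤ k → 0 < a k) (hA : ∀ k, A k = ∑ i ∈ Icc 1 k, a i)
    (hlamA : ∀ k, 1 ≤ k → lam k * A k = (a k) ^ 2) {y x xt : ℕ → E}
    (hx : ∀ k, x k = -∑ i ∈ Icc 1 k, a i • gradient f (y i))
    (hxt : ∀ k, xt k = (a (k + 1) / A (k + 1)) • x k + (A k / A (k + 1)) • y k)
    (hMS : ∀ k, ‖y (k + 1) - (xt k - lam (k + 1) • gradient f (y (k + 1)))‖ ≤
      ‖y (k + 1) - xt k‖) (w : E) (k : ℕ) :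
    potential f w (A k) (x k) (y k) ≤ ‖w‖ ^ 2 / 2 := by
  have hA_succ (n : ℕ) : A (n + 1) = A n + a (n + 1) := by
    rw [hA, hA, sum_Icc_succ_top (by omega)]
  have hx_succ (n : ℕ) : x (n + 1) = x n - a (n + 1) • gradient f (y (n + 1)) := by
    rw [hx, hx, sum_Icc_succ_top (by omega), neg_add, sub_eq_add_neg]
  have hanti : Antitone fun n => potential f w (A n) (x n) (y n) := by
    refine antitone_nat_of_succ_le fun n => ?_
    have hlam := hlamA (n + 1) (by omega)
    have hxt_n := hxt n
    rw [hA_succ] at hlam hxt_n ⊢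
    rw [hx_succ]
    exact potential_step_le hconv (hdiff _) w _ _ _ (hA n ▸ sum_Icc_one_nonneg ha n)
      (ha _ (by omega)) hlam hxt_n (hMS n)
  simpa [potential, hA, hx] using hanti (Nat.zero_le k)

end

end MonteiroSvaiter

open MonteiroSvaiter in
theorem monteiro_svaiter_rate_general (d : ℕ) (f : EuclideanSpace ℝ (Fin d) → ℝ)
    (hconv : ConvexOn ℝ Set.univ f) (hdiff : Differentiable ℝ f)
    (lam a A : ℕ → ℝ)
    (ha : ∀ k, 1 ≤ k → 0 < a k)
    (hA : ∀ k, A k = ∑ i ∈ Finset.Icc 1 k, a i)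
    (hlamA : ∀ k, 1 ≤ k → lam k * A k = (a k) ^ 2)
    (y x xt : ℕ → EuclideanSpace ℝ (Fin d))
    (hx : ∀ k, x k = -∑ i ∈ Finset.Icc 1 k, a i • gradient f (y i))
    (hxt : ∀ k, xt k = (a (k + 1) / A (k + 1)) • x k + (A k / A (k + 1)) • y k)
    (hMS : ∀ k, ‖y (k + 1) - (xt k - lam (k + 1) • gradient f (y (k + 1)))‖ ≤
      ‖y (k + 1) - xt k‖) :
    ∀ (w : EuclideanSpace ℝ (Fin d)) (k : ℕ), 1 ≤ k →
      f (y k) - f w ≤ 2 * ‖w‖ ^ 2 / (∑ i ∈ Finset.Icc 1 k, Real.sqrt (lam i)) ^ 2 := by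
  intro w k hk
  have hpot : A k * (f (y k) - f w) ≤ ‖w‖ ^ 2 / 2 := by
    have := potential_le hconv hdiff ha hA hlamA hx hxt hMS w k
    unfold potential at this
    linarith [sq_nonneg ‖x k - w‖]
  have hsq : (∑ i ∈ Icc 1 k, √(lam i)) ^ 2 ≤ 4 * A k :=
    hA k ▸ sq_sum_sqrt_le ha (fun i hi => hA i ▸ hlamA i hi) k
  have hlam_pos : 0 < lam k :=
    pos_of_mul_pos_left (hlamA k hk ▸ pow_pos (ha k hk) 2) (hA k ▸ sum_Icc_one_nonneg ha k)
  have hS : 0 < ∑ i ∈ Icc 1 k, √(lam i) :=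
    (Real.sqrt_pos.mpr hlam_pos).trans_le
      (single_le_sum (fun i _ => Real.sqrt_nonneg _) (mem_Icc.mpr ⟨hk, le_rfl⟩))
  rw [le_div_iff₀ (pow_pos hS 2)]
  rcases le_or_gt (f (y k) - f w) 0 with hle | hgt
  · nlinarith [sq_nonneg ‖w‖]
  · nlinarith [mul_le_mul_of_nonneg_left hsq hgt.le]

/-- Monteiro–Svaiter framework: under the implicit-gradient condition, the rate
`f (y k) - f x ≤ 2‖x‖² / (∑_{i=1}^k sqrt (λ i))²` holds. -/
theorem monteiro_svaiter_rate (d : ℕ) (f : EuclideanSpace ℝ (Fin d) → ℝ)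
    (hconv : ConvexOn ℝ Set.univ f) (hdiff : Differentiable ℝ f)
    (lam a A : ℕ → ℝ)
    (hlam : ∀ k, 1 ≤ k → 0 < lam k) (ha : ∀ k, 1 ≤ k → 0 < a k)
    (hA : ∀ k, A k = ∑ i ∈ Finset.Icc 1 k, a i)
    (hlamA : ∀ k, 1 ≤ k → lam k * A k = (a k) ^ 2)
    (y x xt : ℕ → EuclideanSpace ℝ (Fin d))
    (hx : ∀ k, x k = -∑ i ∈ Finset.Icc 1 k, a i • gradient f (y i))
    (hxt : ∀ k, xt k = (a (k + 1) / A (k + 1)) • x k + (A k / A (k + 1)) • y k)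
    (hMS : ∀ k, ‖y (k + 1) - (xt k - lam (k + 1) • gradient f (y (k + 1)))‖ ≤
      ‖y (k + 1) - xt k‖) :
    ∀ (w : EuclideanSpace ℝ (Fin d)) (k : ℕ), 1 ≤ k →
      f (y k) - f w ≤ 2 * ‖w‖ ^ 2 / (∑ i ∈ Finset.Icc 1 k, Real.sqrt (lam i)) ^ 2 :=
  monteiro_svaiter_rate_general d f hconv hdiff lam a A ha hA hlamA y x xt hx hxt hMS
end

section
/- Under the refined condition ‖y_{k+1} − (x̃_k − λ_{k+1}∇f(y_{k+1}))‖ ≤ σ‖y_{k+1} − x̃_k‖ with σ ∈ [0,1), the Monteiro–Svaiter iteration satisfies Σ_{i=1}^k (A_i/λ_i)‖y_i − x̃_{i−1}‖² ≤ ‖x*‖²/(1 − σ²), where x* is a minimizer of f. -/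
open scoped RealInnerProductSpace

/-!
Write `g = ∇f(y_{k+1})` and `u = y_{k+1} - x̃_k`. Squaring the error condition and scaling it by
`A_{k+1}/λ_{k+1}`, the relation `λ_{k+1} A_{k+1} = a_{k+1}²` gives
`2 A_{k+1} ⟪g, u⟫ + a_{k+1}² ‖g‖² ≤ -(1 - σ²) (A_{k+1}/λ_{k+1}) ‖u‖²`.
Together with the gradient inequalities of `f` at `y_{k+1}` towards `x*` and `y_k`, this shows that
the potential `A_k (f y_k - f x*) + ‖x_k - x*‖²/2` drops by at least
`(1 - σ²)/2 · (A_{k+1}/λ_{k+1}) ‖u‖²` at each step. The potential starts at `‖x*‖²/2` and stays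
nonnegative, so telescoping gives the bound.
-/

theorem ConvexOn.add_fderiv_le {E : Type*} [NormedAddCommGroup E] [NormedSpace ℝ E]
    {s : Set E} {f : E → ℝ} {f' : E →L[ℝ] ℝ} {w z : E} (hf : ConvexOn ℝ s f)
    (hw : w ∈ s) (hz : z ∈ s) (hd : HasFDerivAt f f' w) :
    f w + f' (z - w) ≤ f z := by
  have hline := hf.comp_affineMap (AffineMap.lineMap (k := ℝ) w z)
  have hderiv : HasDerivAt (f ∘ AffineMap.lineMap w z) (f' (z - w)) (0 : ℝ) :=
    HasFDerivAt.comp_hasDerivAt (0 : ℝ) (by simpa using hd) AffineMap.hasDerivAt_lineMap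
  have := hline.le_slope_of_hasDerivAt (by simpa) (by simpa) one_pos hderiv
  simpa [slope_def_field, map_sub, le_sub_iff_add_le'] using this

theorem ConvexOn.add_inner_gradient_le {E : Type*} [NormedAddCommGroup E]
    [InnerProductSpace ℝ E] [CompleteSpace E] {s : Set E} {f : E → ℝ} {w z : E}
    (hf : ConvexOn ℝ s f) (hw : w ∈ s) (hz : z ∈ s) (hd : DifferentiableAt ℝ f w) :
    f w + ⟪gradient f w, z - w⟫ ≤ f z := by
  simpa using hf.add_fderiv_le hw hz hd.hasGradientAt.hasFDerivAt

theorem add_sum_Icc_le_of_add_le {α : Type*} [AddCommMonoid α] [PartialOrder α]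
    [IsOrderedAddMonoid α] {E c : ℕ → α} (h : ∀ k, E (k + 1) + c (k + 1) ≤ E k) (k : ℕ) :
    E k + ∑ i ∈ Finset.Icc 1 k, c i ≤ E 0 := by
  induction k with
  | zero => simp
  | succ k ih =>
    calc E (k + 1) + ∑ i ∈ Finset.Icc 1 (k + 1), c i
        = E (k + 1) + c (k + 1) + ∑ i ∈ Finset.Icc 1 k, c i := by
          rw [Finset.sum_Icc_succ_top (by omega)]; abel
      _ ≤ E 0 := (add_le_add_left (h k) _).trans ih

theorem monteiro_svaiter_potential_step {E : Type*} [NormedAddCommGroup E]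
    [InnerProductSpace ℝ E] [CompleteSpace E] {f : E → ℝ}
    (hconv : ConvexOn ℝ Set.univ f) {xs x x' y y' xt : E} {σ lam a A A' : ℝ}
    (hdiff : DifferentiableAt ℝ f y') (hA : 0 ≤ A) (ha : 0 < a) (hA' : A' = A + a)
    (hlamA : lam * A' = a ^ 2)
    (hx' : x' = x - a • gradient f y') (hxt : xt = (a / A') • x + (A / A') • y)
    (hMS : ‖y' - (xt - lam • gradient f y')‖ ≤ σ * ‖y' - xt‖) :
    A' * (f y' - f xs) + ‖x' - xs‖ ^ 2 / 2 + (1 - σ ^ 2) / 2 * (A' / lam * ‖y' - xt‖ ^ 2) ≤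
      A * (f y - f xs) + ‖x - xs‖ ^ 2 / 2 := by
  have hxs := hconv.add_inner_gradient_le (Set.mem_univ y') (Set.mem_univ xs) hdiff
  have hy := hconv.add_inner_gradient_le (Set.mem_univ y') (Set.mem_univ y) hdiff
  set g := gradient f y'
  set u := y' - xt with hu_def
  have hA'pos : 0 < A' := by linarith
  have hlam : 0 < lam := pos_of_mul_pos_left (hlamA ▸ by positivity) hA'pos.le
  have herr : 2 * A' * ⟪g, u⟫ + a ^ 2 * ‖g‖ ^ 2 + (1 - σ ^ 2) * (A' / lam * ‖u‖ ^ 2) ≤ 0 := by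
    have h : ‖u‖ ^ 2 + 2 * lam * ⟪g, u⟫ + lam ^ 2 * ‖g‖ ^ 2 ≤ σ ^ 2 * ‖u‖ ^ 2 := by
      have hsq := pow_le_pow_left₀ (norm_nonneg _)
        (show ‖u + lam • g‖ ≤ σ * ‖u‖ by convert hMS using 2; module) 2
      rw [norm_add_sq_real, real_inner_smul_right, real_inner_comm, norm_smul, mul_pow,
        Real.norm_eq_abs, sq_abs] at hsq
      linarith
    have h' := mul_le_mul_of_nonneg_left h (div_pos hA'pos hlam).le
    have hc : A' / lam * lam = A' := div_mul_cancel₀ _ hlam.ne'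
    linear_combination h' - (2 * ⟪g, u⟫ + lam * ‖g‖ ^ 2) * hc - ‖g‖ ^ 2 * hlamA
  have hdist : ‖x' - xs‖ ^ 2 = ‖x - xs‖ ^ 2 - 2 * a * ⟪g, x - xs⟫ + a ^ 2 * ‖g‖ ^ 2 := by
    rw [hx', show x - a • g - xs = (x - xs) - a • g by abel, norm_sub_sq_real,
      real_inner_smul_right, norm_smul, mul_pow, Real.norm_eq_abs, sq_abs, real_inner_comm]
    ring
  have hu : A' * ⟪g, u⟫ = A' * ⟪g, y'⟫ - a * ⟪g, x⟫ - A * ⟪g, y⟫ := by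
    have : A' • u = A' • y' - a • x - A • y := by
      rw [hu_def, hxt, smul_sub, smul_add, smul_smul, smul_smul, mul_div_cancel₀ _ hA'pos.ne',
        mul_div_cancel₀ _ hA'pos.ne']
      abel
    rw [← real_inner_smul_right, this, inner_sub_right, inner_sub_right, real_inner_smul_right,
      real_inner_smul_right, real_inner_smul_right]
  rw [inner_sub_right] at hxs hy hdist
  subst hA'
  linarith [mul_le_mul_of_nonneg_left hxs ha.le, mul_le_mul_of_nonneg_left hy hA]

theorem monteiro_svaiter_refined_general (d : ℕ) (f : EuclideanSpace ℝ (Fin d) → ℝ)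
    (hconv : ConvexOn ℝ Set.univ f) (hdiff : Differentiable ℝ f)
    (xs : EuclideanSpace ℝ (Fin d)) (hxs : ∀ w, f xs ≤ f w)
    (σ : ℝ) (hσ0 : 0 ≤ σ) (hσ1 : σ < 1)
    (lam a A : ℕ → ℝ)
    (ha : ∀ k, 1 ≤ k → 0 < a k)
    (hA : ∀ k, A k = ∑ i ∈ Finset.Icc 1 k, a i)
    (hlamA : ∀ k, 1 ≤ k → lam k * A k = (a k) ^ 2)
    (y x xt : ℕ → EuclideanSpace ℝ (Fin d))
    (hx : ∀ k, x k = -∑ i ∈ Finset.Icc 1 k, a i • gradient f (y i))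
    (hxt : ∀ k, xt k = (a (k + 1) / A (k + 1)) • x k + (A k / A (k + 1)) • y k)
    (hMS : ∀ k, ‖y (k + 1) - (xt k - lam (k + 1) • gradient f (y (k + 1)))‖ ≤
      σ * ‖y (k + 1) - xt k‖) :
    ∀ k : ℕ, 1 ≤ k →
      ∑ i ∈ Finset.Icc 1 k, (A i / lam i) * ‖y i - xt (i - 1)‖ ^ 2 ≤
        ‖xs‖ ^ 2 / (1 - σ ^ 2) := by
  have hA_nonneg (k : ℕ) : 0 ≤ A k :=
    hA k ▸ Finset.sum_nonneg fun i hi => (ha i (Finset.mem_Icc.1 hi).1).le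
  have hA_succ (k : ℕ) : A (k + 1) = A k + a (k + 1) := by
    rw [hA, hA, Finset.sum_Icc_succ_top (by omega)]
  have hx_succ (k : ℕ) : x (k + 1) = x k - a (k + 1) • gradient f (y (k + 1)) := by
    rw [hx, hx, Finset.sum_Icc_succ_top (by omega)]
    abel
  set P : ℕ → ℝ := fun k => A k * (f (y k) - f xs) + ‖x k - xs‖ ^ 2 / 2
  have hdecay := add_sum_Icc_le_of_add_le (E := P)
    (c := fun i => (1 - σ ^ 2) / 2 * ((A i / lam i) * ‖y i - xt (i - 1)‖ ^ 2)) fun k =>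
      monteiro_svaiter_potential_step hconv (hdiff _) (hA_nonneg k) (ha _ (by omega))
        (hA_succ k) (hlamA _ (by omega)) (hx_succ k) (hxt k) (hMS k)
  intro k _
  have hP0 : P 0 = ‖xs‖ ^ 2 / 2 := by simp [P, hA, hx]
  have hPk : 0 ≤ P k := by
    have := mul_nonneg (hA_nonneg k) (sub_nonneg.2 (hxs (y k)))
    positivity
  have hσ : 0 < 1 - σ ^ 2 := by nlinarith
  rw [le_div_iff₀ hσ]
  have := hdecay k
  rw [← Finset.mul_sum, hP0] at this
  linarith

/-- Monteiro–Svaiter framework with the refined condition with constant `σ ∈ [0,1)`: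
`∑_{i=1}^k (A i / λ i) ‖y i - x̃ (i-1)‖² ≤ ‖x*‖² / (1 - σ²)`. -/
theorem monteiro_svaiter_refined (d : ℕ) (f : EuclideanSpace ℝ (Fin d) → ℝ)
    (hconv : ConvexOn ℝ Set.univ f) (hdiff : Differentiable ℝ f)
    (xs : EuclideanSpace ℝ (Fin d)) (hxs : ∀ w, f xs ≤ f w)
    (σ : ℝ) (hσ0 : 0 ≤ σ) (hσ1 : σ < 1)
    (lam a A : ℕ → ℝ)
    (hlam : ∀ k, 1 ≤ k → 0 < lam k) (ha : ∀ k, 1 ≤ k → 0 < a k)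
    (hA : ∀ k, A k = ∑ i ∈ Finset.Icc 1 k, a i)
    (hlamA : ∀ k, 1 ≤ k → lam k * A k = (a k) ^ 2)
    (y x xt : ℕ → EuclideanSpace ℝ (Fin d))
    (hx : ∀ k, x k = -∑ i ∈ Finset.Icc 1 k, a i • gradient f (y i))
    (hxt : ∀ k, xt k = (a (k + 1) / A (k + 1)) • x k + (A k / A (k + 1)) • y k)
    (hMS : ∀ k, ‖y (k + 1) - (xt k - lam (k + 1) • gradient f (y (k + 1)))‖ ≤
      σ * ‖y (k + 1) - xt k‖) :
    ∀ k : ℕ, 1 ≤ k →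
      ∑ i ∈ Finset.Icc 1 k, (A i / lam i) * ‖y i - xt (i - 1)‖ ^ 2 ≤
        ‖xs‖ ^ 2 / (1 - σ ^ 2) :=
  monteiro_svaiter_refined_general d f hconv hdiff xs hxs σ hσ0 hσ1 lam a A ha hA hlamA y x xt hx
    hxt hMS
end

section
/- Let f : ℝ^d → ℝ have L_p-Lipschitz p-th derivative, and let y minimize w ↦ f_p(w, x) + (L_p/p!)‖w − x‖^{p+1}, where f_p is the p-th order Taylor expansion of f at x. If λ > 0 satisfies 1/2 ≤ λ L_p ‖y − x‖^{p−1}/(p−1)! ≤ p/(p+1), then ‖y − (x − λ∇f(y))‖ ≤ (1/2)‖y − x‖. -/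
/-!
Write `p = n + 1` and `u = y - x`. By symmetry of iterated derivatives, the derivative of the
Taylor polynomial of `f` of order `n + 1` is the Taylor polynomial of `f'` of order `n`, so the
first-order condition at the minimiser `y` says that this polynomial equals `-κ ⟪u, ·⟫` with
`κ = (n + 2) L / (n + 1)! ‖u‖ⁿ`. The Taylor estimate for `f'`, whose `n`-th derivative is
`L`-Lipschitz, then gives `∇f(y) = -κ u + e` with `‖e‖ ≤ σ ‖u‖`, `σ = L / (n + 1)! ‖u‖ⁿ`.
Hence `y - x + λ ∇f(y) = (1 - λκ) u + λ e`, and with `r = λ L ‖u‖ⁿ / n!` we have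
`λκ = (n + 2) r / (n + 1) ≤ 1` and `λσ = r / (n + 1)`, so its norm is at most
`(1 - r) ‖u‖ ≤ ‖u‖ / 2`.
-/

open Function Finset Nat

universe u

section NormedSpace

variable {E F : Type*} [NormedAddCommGroup E] [NormedSpace ℝ E]
  [NormedAddCommGroup F] [NormedSpace ℝ F] {f : E → F}

theorem iteratedFDeriv_add_two_apply_cons_cons {n : ℕ} (x v w : E) (m : Fin n → E) :
    iteratedFDeriv ℝ (n + 2) f x (Fin.cons v (Fin.cons w m)) =
      fderiv ℝ (fderiv ℝ (iteratedFDeriv ℝ n f)) x v w m := by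
  have hcomp := LinearIsometryEquiv.comp_fderiv (𝕜 := ℝ)
    (continuousMultilinearCurryLeftEquiv ℝ (fun _ : Fin (n + 1) => E) F).symm
    (f := fderiv ℝ (iteratedFDeriv ℝ n f)) (x := x)
  rw [iteratedFDeriv_succ_apply_left, iteratedFDeriv_succ_eq_comp_left, hcomp]
  rfl

theorem iteratedFDeriv_cons_cons_comm {n : ℕ} (hf : ContDiff ℝ (n + 2) f) (x v w : E)
    (m : Fin n → E) :
    iteratedFDeriv ℝ (n + 2) f x (Fin.cons v (Fin.cons w m)) =
      iteratedFDeriv ℝ (n + 2) f x (Fin.cons w (Fin.cons v m)) := by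
  have hsymm : IsSymmSndFDerivAt ℝ (iteratedFDeriv ℝ n f) x :=
    (hf.iteratedFDeriv_right (m := 2) (by norm_cast; omega)).contDiffAt.isSymmSndFDerivAt
      (by simp)
  rw [iteratedFDeriv_add_two_apply_cons_cons, iteratedFDeriv_add_two_apply_cons_cons,
    hsymm.eq]

theorem iteratedFDeriv_update_const_eq_cons {n : ℕ} (hf : ContDiff ℝ (n + 1) f) (x u v : E)
    (i : Fin (n + 1)) :
    iteratedFDeriv ℝ (n + 1) f x (update (fun _ => u) i v) =
      iteratedFDeriv ℝ (n + 1) f x (Fin.cons v fun _ => u) := by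
  have hcons : ∀ k, (fun _ : Fin (k + 1) => u) = Fin.cons u fun _ => u := fun k =>
    (Fin.cons_self_tail _).symm
  induction n generalizing x with
  | zero => rw [Fin.fin_one_eq_zero i, hcons, Fin.update_cons_zero]
  | succ n ih =>
    cases i using Fin.cases with
    | zero => rw [hcons, Fin.update_cons_zero]
    | succ a =>
      -- Differentiating the induction hypothesis moves `v` to the second slot; symmetry of the
      -- second derivative then swaps it into the first.
      have hdiff := hf.differentiable_iteratedFDeriv (m := n + 1) (by norm_cast; omega) x
      have hmove : (fun y => iteratedFDeriv ℝ (n + 1) f y (update (fun _ => u) a v)) =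
          fun y => iteratedFDeriv ℝ (n + 1) f y (Fin.cons v fun _ => u) :=
        funext fun y => ih (hf.of_le (by norm_cast; omega)) y a
      calc iteratedFDeriv ℝ (n + 2) f x (update (fun _ => u) a.succ v)
          = iteratedFDeriv ℝ (n + 2) f x (Fin.cons u (update (fun _ => u) a v)) := by
            rw [Fin.cons_update, ← hcons]
        _ = iteratedFDeriv ℝ (n + 2) f x (Fin.cons u (Fin.cons v fun _ => u)) := by
            rw [hdiff.iteratedFDeriv_succ_apply_left', hdiff.iteratedFDeriv_succ_apply_left']
            simp only [Fin.tail_cons, Fin.cons_zero, hmove]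
        _ = iteratedFDeriv ℝ (n + 2) f x (Fin.cons v fun _ => u) := by
            rw [iteratedFDeriv_cons_cons_comm hf, ← hcons]

theorem hasFDerivAt_iteratedFDeriv_apply_const_sub {n : ℕ} (hf : ContDiff ℝ (n + 1) f)
    (x w : E) :
    HasFDerivAt (fun z => iteratedFDeriv ℝ (n + 1) f x fun _ => z - x)
      (((n : ℝ) + 1) • iteratedFDeriv ℝ n (fderiv ℝ f) x fun _ => w - x) w := by
  classical
  refine (HasFDerivAt.multilinear_comp (f := iteratedFDeriv ℝ (n + 1) f x)
    fun _ => (hasFDerivAt_id w).sub_const x).congr_fderiv ?_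
  ext v
  have hlast : iteratedFDeriv ℝ n (fderiv ℝ f) x (fun _ => w - x) v =
      iteratedFDeriv ℝ (n + 1) f x (update (fun _ => w - x) (Fin.last n) v) := by
    rw [iteratedFDeriv_succ_apply_right]
    simp only [Fin.init_update_last, update_self]
    rfl
  simp [hlast, iteratedFDeriv_update_const_eq_cons hf, ← Nat.cast_smul_eq_nsmul ℝ]

variable (f) in
/-- `taylorPolynomial f n x w` is the paper's `f_n(w, x)`. -/
noncomputable def taylorPolynomial (n : ℕ) (x w : E) : F :=
  ∑ i ∈ range (n + 1), (i ! : ℝ)⁻¹ • iteratedFDeriv ℝ i f x fun _ => w - x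

theorem hasFDerivAt_taylorPolynomial {n : ℕ} (hf : ContDiff ℝ (n + 1) f) (x w : E) :
    HasFDerivAt (taylorPolynomial f (n + 1) x) (taylorPolynomial (fderiv ℝ f) n x w) w := by
  have hsplit : taylorPolynomial f (n + 1) x = fun z =>
      (∑ i ∈ range (n + 1), ((i + 1)! : ℝ)⁻¹ • iteratedFDeriv ℝ (i + 1) f x fun _ => z - x) +
        f x := by
    ext z
    simp [taylorPolynomial, sum_range_succ' _ (n + 1)]
  rw [hsplit]
  refine (HasFDerivAt.fun_sum fun i hi => ((hasFDerivAt_iteratedFDeriv_apply_const_sub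
    (hf.of_le ?_) x w).const_smul _)).add_const _ |>.congr_fderiv ?_
  · exact_mod_cast mem_range.mp hi
  · simp only [taylorPolynomial, smul_smul]
    refine sum_congr rfl fun i _ => ?_
    rw [factorial_succ]
    push_cast
    congr 1
    field_simp

theorem taylorPolynomial_self (n : ℕ) (x : E) : taylorPolynomial f n x x = f x := by
  rw [taylorPolynomial, sum_range_succ']
  simp [← Pi.zero_def]

theorem taylorPolynomial_zero (x w : E) : taylorPolynomial f 0 x w = f x := by
  simp [taylorPolynomial]

theorem norm_sub_le_of_norm_fderiv_le_mul_pow {R : E → F} {R' : E → E →L[ℝ] F} {C : ℝ} {k : ℕ}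
    {x : E} (hR : ∀ w, HasFDerivAt R (R' w) w) (hR' : ∀ w, ‖R' w‖ ≤ C * ‖w - x‖ ^ k) (y : E) :
    ‖R y - R x‖ ≤ C / (k + 1) * ‖y - x‖ ^ (k + 1) := by
  set u := y - x
  have hline : ∀ t : ℝ, HasDerivAt (fun s : ℝ => R (x + s • u) - R x) (R' (x + t • u) u) t :=
    fun t => ((hR _).comp_hasDerivAt t (((hasDerivAt_id t).smul_const u).const_add x)).sub_const _
      |>.congr_deriv (by simp)
  have hB : ∀ t : ℝ, HasDerivAt (fun s => C / (k + 1) * ‖u‖ ^ (k + 1) * s ^ (k + 1))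
      (C * ‖u‖ ^ (k + 1) * t ^ k) t := fun t =>
    ((hasDerivAt_pow (k + 1) t).const_mul _).congr_deriv (by push_cast; field_simp)
  have hbound : ∀ t ∈ Set.Ico (0 : ℝ) 1, ‖R' (x + t • u) u‖ ≤ C * ‖u‖ ^ (k + 1) * t ^ k := by
    intro t ht
    calc ‖R' (x + t • u) u‖ ≤ ‖R' (x + t • u)‖ * ‖u‖ := (R' _).le_opNorm u
      _ ≤ C * ‖x + t • u - x‖ ^ k * ‖u‖ := by gcongr; exact hR' _
      _ = C * ‖u‖ ^ (k + 1) * t ^ k := by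
        rw [add_sub_cancel_left, norm_smul, Real.norm_of_nonneg ht.1]
        ring
  simpa [u] using image_norm_le_of_norm_deriv_right_le_deriv_boundary
    (fun t _ => (hline t).continuousAt.continuousWithinAt) (fun t _ => (hline t).hasDerivWithinAt)
    (by simp) hB hbound (Set.right_mem_Icc.2 zero_le_one)

theorem norm_iteratedFDeriv_fderiv_sub {n : ℕ} (u v : E) :
    ‖iteratedFDeriv ℝ n (fderiv ℝ f) u - iteratedFDeriv ℝ n (fderiv ℝ f) v‖ =
      ‖iteratedFDeriv ℝ (n + 1) f u - iteratedFDeriv ℝ (n + 1) f v‖ := by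
  rw [iteratedFDeriv_succ_eq_comp_right, iteratedFDeriv_succ_eq_comp_right, comp_apply,
    comp_apply, ← LinearIsometryEquiv.map_sub, LinearIsometryEquiv.norm_map]

end NormedSpace

/-- The induction passes from `g` to `fderiv ℝ g`, with values in `E →L[ℝ] F`; hence `E` and `F`
share a universe. -/
theorem norm_sub_taylorPolynomial_le {E F : Type u} [NormedAddCommGroup E] [NormedSpace ℝ E]
    [NormedAddCommGroup F] [NormedSpace ℝ F] {g : E → F} {L : ℝ} {n : ℕ} (hg : ContDiff ℝ n g)
    (hLip : ∀ u v, ‖iteratedFDeriv ℝ n g u - iteratedFDeriv ℝ n g v‖ ≤ L * ‖u - v‖) (x y : E) :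
    ‖g y - taylorPolynomial g n x y‖ ≤ L / (n + 1)! * ‖y - x‖ ^ (n + 1) := by
  induction n generalizing F y with
  | zero =>
    have h := hLip y x
    rw [iteratedFDeriv_zero_eq_comp, comp_apply, comp_apply, ← LinearIsometryEquiv.map_sub,
      LinearIsometryEquiv.norm_map] at h
    simpa [taylorPolynomial_zero] using h
  | succ n ih =>
    have hR : ∀ w, HasFDerivAt (fun z => g z - taylorPolynomial g (n + 1) x z)
        (fderiv ℝ g w - taylorPolynomial (fderiv ℝ g) n x w) w := fun w =>
      (hg.differentiable (by simp) w).hasFDerivAt.sub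
        (hasFDerivAt_taylorPolynomial hg x w)
    have hR' := fun w => ih (hg.fderiv_right (by norm_cast))
      (fun u v => (norm_iteratedFDeriv_fderiv_sub u v).trans_le (hLip u v)) w
    have hmv := norm_sub_le_of_norm_fderiv_le_mul_pow hR hR' y
    rw [taylorPolynomial_self, sub_self, sub_zero] at hmv
    convert hmv using 2
    rw [factorial_succ (n + 1)]
    push_cast
    field_simp

theorem norm_add_smul_le_of_norm_add_smul_le {V : Type*} [NormedAddCommGroup V] [NormedSpace ℝ V]
    {u g : V} {lam κ σ : ℝ} (hlam : 0 ≤ lam) (hg : ‖g + κ • u‖ ≤ σ * ‖u‖) :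
    ‖u + lam • g‖ ≤ (|1 - lam * κ| + lam * σ) * ‖u‖ :=
  calc ‖u + lam • g‖ = ‖(1 - lam * κ) • u + lam • (g + κ • u)‖ := by congr 1; module
    _ ≤ |1 - lam * κ| * ‖u‖ + lam * (σ * ‖u‖) := by
      refine (norm_add_le _ _).trans (add_le_add (norm_smul _ _).le ?_)
      rw [norm_smul, Real.norm_of_nonneg hlam]
      exact mul_le_mul_of_nonneg_left hg hlam
    _ = (|1 - lam * κ| + lam * σ) * ‖u‖ := by ring

section InnerProductSpace

variable {E : Type*} [NormedAddCommGroup E] [InnerProductSpace ℝ E]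

theorem hasFDerivAt_norm_sub_pow (n : ℕ) (x y : E) :
    HasFDerivAt (fun w => ‖w - x‖ ^ (n + 2))
      ((((n : ℝ) + 2) * ‖y - x‖ ^ n) • innerSL ℝ (y - x)) y := by
  have h := (hasFDerivAt_norm_rpow (y - x) (p := n + 2) (by linarith [n.cast_nonneg (α := ℝ)])).comp
    y ((hasFDerivAt_id y).sub_const x)
  have hfun : (fun w => ‖w - x‖ ^ (n + 2)) =
      (fun v : E => ‖v‖ ^ ((n : ℝ) + 2)) ∘ fun w => id w - x := by
    ext w
    simp [← Real.rpow_natCast]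
  rw [hfun]
  refine h.congr_fderiv ?_
  ext v
  simp [← Real.rpow_natCast]

theorem taylorPolynomial_fderiv_eq_of_isLocalMin {f : E → ℝ} {n : ℕ} (hf : ContDiff ℝ (n + 1) f)
    {c : ℝ} {x y : E}
    (hy : IsLocalMin (fun w => taylorPolynomial f (n + 1) x w + c * ‖w - x‖ ^ (n + 2)) y) :
    taylorPolynomial (fderiv ℝ f) n x y =
      -((((n : ℝ) + 2) * c * ‖y - x‖ ^ n) • innerSL ℝ (y - x)) := by
  refine eq_neg_of_add_eq_zero_left ?_
  convert hy.hasFDerivAt_eq_zero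
    ((hasFDerivAt_taylorPolynomial hf x y).add ((hasFDerivAt_norm_sub_pow n x y).const_mul c))
    using 2
  rw [smul_smul, mul_left_comm, mul_assoc]

theorem norm_gradient_sub [CompleteSpace E] (f : E → ℝ) (y v : E) :
    ‖gradient f y - v‖ = ‖fderiv ℝ f y - innerSL ℝ v‖ := by
  rw [gradient, ← LinearIsometryEquiv.norm_map (InnerProductSpace.toDual ℝ E), map_sub,
    LinearIsometryEquiv.apply_symm_apply]
  rfl

end InnerProductSpace

theorem norm_gradient_add_smul_le_of_isLocalMin {E : Type} [NormedAddCommGroup E]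
    [InnerProductSpace ℝ E] [CompleteSpace E] {f : E → ℝ} {L : ℝ} {n : ℕ}
    (hf : ContDiff ℝ (n + 1) f)
    (hLip : ∀ u v, ‖iteratedFDeriv ℝ (n + 1) f u - iteratedFDeriv ℝ (n + 1) f v‖ ≤ L * ‖u - v‖)
    {x y : E}
    (hy : IsLocalMin
      (fun w => taylorPolynomial f (n + 1) x w + L / (n + 1)! * ‖w - x‖ ^ (n + 2)) y) :
    ‖gradient f y + (((n : ℝ) + 2) * (L / (n + 1)!) * ‖y - x‖ ^ n) • (y - x)‖ ≤
      L / (n + 1)! * ‖y - x‖ ^ n * ‖y - x‖ :=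
  calc _ = ‖fderiv ℝ f y - taylorPolynomial (fderiv ℝ f) n x y‖ := by
        rw [taylorPolynomial_fderiv_eq_of_isLocalMin hf hy, ← sub_neg_eq_add, norm_gradient_sub,
          map_neg, map_smul]
    _ ≤ L / (n + 1)! * ‖y - x‖ ^ (n + 1) := norm_sub_taylorPolynomial_le (hf.fderiv_right le_rfl)
        (fun u v => (norm_iteratedFDeriv_fderiv_sub u v).trans_le (hLip u v)) x y
    _ = L / (n + 1)! * ‖y - x‖ ^ n * ‖y - x‖ := by ring

theorem abs_one_sub_mul_add_mul_le_half {n : ℕ} {lam L s : ℝ}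
    (hlow : 1 / 2 ≤ lam * L * s ^ n / n !) (hhigh : lam * L * s ^ n / n ! ≤ (n + 1) / (n + 2)) :
    |1 - lam * ((n + 2) * (L / (n + 1)!) * s ^ n)| + lam * (L / (n + 1)! * s ^ n) ≤ 1 / 2 := by
  set r := lam * L * s ^ n / (n ! : ℝ)
  have hfact : ((n + 1)! : ℝ) = (n + 1) * n ! := by push_cast [factorial_succ]; ring
  have hκ : lam * ((n + 2) * (L / (n + 1)!) * s ^ n) = (n + 2) / (n + 1) * r := by
    simp only [r, hfact]; field_simp
  have hσ : lam * (L / (n + 1)! * s ^ n) = r / (n + 1) := by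
    simp only [r, hfact]; field_simp
  have hκ_le : (n + 2) / (n + 1) * r ≤ 1 := by
    rw [le_div_iff₀ (by positivity)] at hhigh
    rw [div_mul_eq_mul_div, div_le_one (by positivity)]
    linarith
  rw [hκ, hσ, abs_of_nonneg (sub_nonneg.mpr hκ_le)]
  calc _ = 1 - r := by field_simp; ring
    _ ≤ 1 / 2 := by linarith

theorem atd_implicit_gradient_step_general (d p : ℕ) (hp : 1 ≤ p) (L lam : ℝ)
    (hlam : 0 < lam) (f : EuclideanSpace ℝ (Fin d) → ℝ)
    (hf : ContDiff ℝ p f)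
    (hLip : ∀ u v, ‖iteratedFDeriv ℝ p f u - iteratedFDeriv ℝ p f v‖ ≤ L * ‖u - v‖)
    (x y : EuclideanSpace ℝ (Fin d))
    (fp : EuclideanSpace ℝ (Fin d) → ℝ)
    (hfp : ∀ w, fp w = ∑ i ∈ Finset.range (p + 1),
      (1 / (Nat.factorial i : ℝ)) * iteratedFDeriv ℝ i f x (fun _ => w - x))
    (hy : ∀ w, fp y + (L / (Nat.factorial p : ℝ)) * ‖y - x‖ ^ (p + 1) ≤
      fp w + (L / (Nat.factorial p : ℝ)) * ‖w - x‖ ^ (p + 1))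
    (hlow : 1 / 2 ≤ lam * L * ‖y - x‖ ^ (p - 1) / (Nat.factorial (p - 1) : ℝ))
    (hhigh : lam * L * ‖y - x‖ ^ (p - 1) / (Nat.factorial (p - 1) : ℝ) ≤ (p : ℝ) / (p + 1)) :
    ‖y - (x - lam • gradient f y)‖ ≤ (1 / 2) * ‖y - x‖ := by
  obtain ⟨n, rfl⟩ : ∃ n, p = n + 1 := ⟨p - 1, by omega⟩
  simp only [add_tsub_cancel_right] at hlow hhigh
  have hfp' : fp = taylorPolynomial f (n + 1) x := funext fun w => by
    simp only [hfp, taylorPolynomial, one_div, smul_eq_mul]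
  have hgrad := norm_gradient_add_smul_le_of_isLocalMin hf hLip
    (Filter.Eventually.of_forall (hfp' ▸ hy))
  calc ‖y - (x - lam • gradient f y)‖ = ‖(y - x) + lam • gradient f y‖ := by congr 1; abel
    _ ≤ _ := norm_add_smul_le_of_norm_add_smul_le hlam.le hgrad
    _ ≤ 1 / 2 * ‖y - x‖ := by
      gcongr
      exact abs_one_sub_mul_add_mul_le_half hlow (by convert hhigh using 1; push_cast; ring)

/-- ATD step is an implicit gradient step: if `y` minimizes the regularized Taylor
expansion and `λ` satisfies the bracketing condition, then
`‖y - (x - λ∇f(y))‖ ≤ (1/2)‖y - x‖`. -/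
theorem atd_implicit_gradient_step (d p : ℕ) (hp : 1 ≤ p) (L lam : ℝ) (hL : 0 < L)
    (hlam : 0 < lam) (f : EuclideanSpace ℝ (Fin d) → ℝ)
    (hf : ContDiff ℝ p f)
    (hLip : ∀ u v, ‖iteratedFDeriv ℝ p f u - iteratedFDeriv ℝ p f v‖ ≤ L * ‖u - v‖)
    (x y : EuclideanSpace ℝ (Fin d))
    (fp : EuclideanSpace ℝ (Fin d) → ℝ)
    (hfp : ∀ w, fp w = ∑ i ∈ Finset.range (p + 1),
      (1 / (Nat.factorial i : ℝ)) * iteratedFDeriv ℝ i f x (fun _ => w - x))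
    (hy : ∀ w, fp y + (L / (Nat.factorial p : ℝ)) * ‖y - x‖ ^ (p + 1) ≤
      fp w + (L / (Nat.factorial p : ℝ)) * ‖w - x‖ ^ (p + 1))
    (hlow : 1 / 2 ≤ lam * L * ‖y - x‖ ^ (p - 1) / (Nat.factorial (p - 1) : ℝ))
    (hhigh : lam * L * ‖y - x‖ ^ (p - 1) / (Nat.factorial (p - 1) : ℝ) ≤ (p : ℝ) / (p + 1)) :
    ‖y - (x - lam • gradient f y)‖ ≤ (1 / 2) * ‖y - x‖ :=
  atd_implicit_gradient_step_general d p hp L lam hlam f hf hLip x y fp hfp hy hlow hhigh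
end

section
/- Let g : [0,1] → ℝ₊ be differentiable, θ* ∈ [0,1] with g(θ*) = 7/12, and ω ≥ 0 such that whenever |θ − θ*| ≤ 1/(40ω), one has |d/dθ log g(θ)| ≤ ω(1 + 1/g(θ) + g(θ)). Then |θ − θ*| ≤ 1/(40ω) implies g(θ) ∈ [1/2, 2/3]. -/
lemma bsw_exp_bound : Real.exp (11 / 120) ≤ 120 / 109 := by
  have h0 := Real.add_one_le_exp (-(11 / 120 : ℝ))
  rw [Real.exp_neg] at h0
  have hp := Real.exp_pos (11 / 120 : ℝ)
  have h1 : (109 / 120 : ℝ) * Real.exp (11 / 120) ≤ 1 := by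
    have h2 := mul_le_mul_of_nonneg_right h0 hp.le
    rw [inv_mul_cancel₀ hp.ne'] at h2
    nlinarith
  nlinarith

lemma bsw_log_window {x : ℝ} (hx : 0 < x)
    (h : |Real.log x - Real.log (7 / 12)| ≤ 11 / 120) :
    763 / 1440 ≤ x ∧ x ≤ 70 / 109 := by
  have hexp := bsw_exp_bound
  have h712 : (0 : ℝ) < 7 / 12 := by norm_num
  rw [abs_le] at h
  constructor
  · have h1 : Real.log (7 / 12) - 11 / 120 ≤ Real.log x := by linarith [h.1]
    have h2 : Real.exp (Real.log (7 / 12) - 11 / 120) ≤ x := by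
      calc Real.exp (Real.log (7 / 12) - 11 / 120)
          ≤ Real.exp (Real.log x) := Real.exp_le_exp.2 h1
        _ = x := Real.exp_log hx
    rw [Real.exp_sub, Real.exp_log h712] at h2
    have h4 : (7 : ℝ) / 12 ≤ x * Real.exp (11 / 120) :=
      (div_le_iff₀ (Real.exp_pos _)).mp h2
    nlinarith [mul_le_mul_of_nonneg_left hexp hx.le]
  · have h1 : Real.log x ≤ Real.log (7 / 12) + 11 / 120 := by linarith [h.2]
    have h2 : x ≤ Real.exp (Real.log (7 / 12) + 11 / 120) := by
      calc x = Real.exp (Real.log x) := (Real.exp_log hx).symm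
        _ ≤ Real.exp (Real.log (7 / 12) + 11 / 120) := Real.exp_le_exp.2 h1
    rw [Real.exp_add, Real.exp_log h712] at h2
    nlinarith

/-- Binary search window lemma: if `g(θ*) = 7/12` and the log-derivative of `g` is
controlled near `θ*`, then `g(θ) ∈ [1/2, 2/3]` whenever `|θ - θ*| ≤ 1/(40ω)`. -/
theorem binary_search_window (g : ℝ → ℝ)
    (hg : ∀ θ ∈ Set.Icc (0 : ℝ) 1, 0 < g θ)
    (hdiff : ∀ θ ∈ Set.Icc (0 : ℝ) 1, DifferentiableAt ℝ g θ)
    (θstar : ℝ) (hθstar : θstar ∈ Set.Icc (0 : ℝ) 1) (hval : g θstar = 7 / 12)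
    (ω : ℝ) (hω : 0 ≤ ω)
    (hbound : ∀ θ ∈ Set.Icc (0 : ℝ) 1, |θ - θstar| ≤ 1 / (40 * ω) →
      |deriv (fun t => Real.log (g t)) θ| ≤ ω * (1 + 1 / g θ + g θ)) :
    ∀ θ ∈ Set.Icc (0 : ℝ) 1, |θ - θstar| ≤ 1 / (40 * ω) →
      g θ ∈ Set.Icc (1 / 2 : ℝ) (2 / 3) := by
  rcases hω.eq_or_lt with rfl | hω'
  · intro θ hθ habs
    rw [mul_zero, div_zero] at habs
    have hθeq : θ = θstar := by
      have := abs_nonneg (θ - θstar)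
      have h0 : |θ - θstar| = 0 := le_antisymm habs this
      have := abs_eq_zero.mp h0
      linarith
    rw [hθeq, hval]
    constructor <;> norm_num
  -- main case ω > 0
  set δ : ℝ := 1 / (40 * ω) with hδdef
  have hδpos : 0 < δ := by positivity
  set L : ℝ := 11 / 3 * ω with hLdef
  have hLnn : 0 ≤ L := by positivity
  have hLδ : L * δ = 11 / 120 := by
    rw [hLdef, hδdef]; field_simp; ring
  set h : ℝ → ℝ := fun t => Real.log (g t) with hhdef
  set J : Set ℝ := Set.Icc 0 1 ∩ Set.Icc (θstar - δ) (θstar + δ) with hJdef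
  have hJmem : ∀ t, t ∈ J ↔ t ∈ Set.Icc (0 : ℝ) 1 ∧ |t - θstar| ≤ δ := by
    intro t
    simp only [hJdef, Set.mem_inter_iff, Set.mem_Icc, abs_le]
    constructor
    · rintro ⟨h1, h2, h3⟩; exact ⟨h1, by linarith, by linarith⟩
    · rintro ⟨h1, h2, h3⟩; exact ⟨h1, by linarith, by linarith⟩
  have hJclosed : IsClosed J := (isClosed_Icc).inter isClosed_Icc
  have hJconv : Convex ℝ J := (convex_Icc _ _).inter (convex_Icc _ _)
  set W : Set ℝ := g ⁻¹' Set.Icc (1 / 2 : ℝ) (2 / 3) with hWdef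
  set A : Set ℝ := {t ∈ J | Set.uIcc θstar t ⊆ W} with hAdef
  have hθstarJ : θstar ∈ J := by
    rw [hJmem]; refine ⟨hθstar, ?_⟩; simp [abs_of_nonneg, hδpos.le]
  have hθstarA : θstar ∈ A := by
    refine ⟨hθstarJ, ?_⟩
    intro x hx
    rw [Set.uIcc_self, Set.mem_singleton_iff] at hx
    subst hx
    simp only [hWdef, Set.mem_preimage, hval, Set.mem_Icc]
    norm_num
  -- membership in A forces g into a strict sub-window, via the MVT
  have hAwin : ∀ t ∈ A, 763 / 1440 ≤ g t ∧ g t ≤ 70 / 109 := by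
    rintro t ⟨htJ, htW⟩
    obtain ⟨ht01, htδ⟩ := (hJmem t).1 htJ
    set K : Set ℝ := Set.uIcc θstar t with hKdef
    have hKJ : K ⊆ J := hJconv.ordConnected.uIcc_subset hθstarJ htJ
    have hKconv : Convex ℝ K := convex_uIcc _ _
    have hderiv : ∀ x ∈ K, HasDerivWithinAt h (deriv h x) K x := by
      intro x hx
      obtain ⟨hx01, _⟩ := (hJmem x).1 (hKJ hx)
      exact (((hdiff x hx01).log (hg x hx01).ne').hasDerivAt).hasDerivWithinAt
    have hbnd : ∀ x ∈ K, ‖deriv h x‖ ≤ L := by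
      intro x hx
      obtain ⟨hx01, hxδ⟩ := (hJmem x).1 (hKJ hx)
      obtain ⟨hg1, hg2⟩ : g x ∈ Set.Icc (1 / 2 : ℝ) (2 / 3) := htW hx
      have hb := hbound x hx01 hxδ
      rw [Real.norm_eq_abs]
      have hgpos := hg x hx01
      have hinv : 1 / g x ≤ 2 := by rw [div_le_iff₀ hgpos]; linarith
      have hcomb : ω * (1 + 1 / g x + g x) ≤ L := by
        rw [hLdef]; nlinarith
      exact hb.trans hcomb
    have hmvt := hKconv.norm_image_sub_le_of_norm_hasDerivWithin_le hderiv hbnd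
      (Set.left_mem_uIcc) (Set.right_mem_uIcc)
    rw [Real.norm_eq_abs, Real.norm_eq_abs] at hmvt
    have hkey : |h t - h θstar| ≤ 11 / 120 := by
      calc |h t - h θstar| ≤ L * |t - θstar| := hmvt
        _ ≤ L * δ := mul_le_mul_of_nonneg_left htδ hLnn
        _ = 11 / 120 := hLδ
    have hlog : h θstar = Real.log (7 / 12) := by rw [hhdef]; simp [hval]
    rw [hlog] at hkey
    exact bsw_log_window (hg t ht01) hkey
  -- A is sequentially closed, hence closed
  have hAclosed : IsClosed A := by
    apply IsSeqClosed.isClosed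
    intro f x hf hx
    have hxJ : x ∈ J := hJclosed.isSeqClosed (fun n => (hf n).1) hx
    refine ⟨hxJ, ?_⟩
    intro y hy
    by_cases hyx : y = x
    · subst hyx
      obtain ⟨hy01, _⟩ := (hJmem y).1 hxJ
      have hcont : ContinuousAt g y := (hdiff y hy01).continuousAt
      have htend : Filter.Tendsto (fun n => g (f n)) Filter.atTop (nhds (g y)) :=
        hcont.tendsto.comp hx
      have hmemn : ∀ n, g (f n) ∈ Set.Icc (1 / 2 : ℝ) (2 / 3) := fun n =>
        (hf n).2 Set.right_mem_uIcc
      exact isClosed_Icc.isSeqClosed hmemn htend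
    · have : ∃ n, y ∈ Set.uIcc θstar (f n) := by
        rcases Set.mem_uIcc.1 hy with ⟨h1, h2⟩ | ⟨h1, h2⟩
        · have hlt : y < x := lt_of_le_of_ne h2 hyx
          obtain ⟨n, hn⟩ := (hx.eventually (eventually_gt_nhds hlt)).exists
          exact ⟨n, Set.mem_uIcc.2 (Or.inl ⟨h1, hn.le⟩)⟩
        · have hlt : x < y := lt_of_le_of_ne h1 (Ne.symm hyx)
          obtain ⟨n, hn⟩ := (hx.eventually (eventually_lt_nhds hlt)).exists
          exact ⟨n, Set.mem_uIcc.2 (Or.inr ⟨hn.le, h2⟩)⟩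
      obtain ⟨n, hn⟩ := this
      exact (hf n).2 hn
  -- A is relatively open in J
  have hopen : ∀ t, ∃ ε, 0 < ε ∧ (t ∈ A → Metric.ball t ε ∩ J ⊆ A) := by
    intro t
    by_cases htA : t ∈ A
    · obtain ⟨htJ, htW⟩ := htA
      obtain ⟨ht01, htδ⟩ := (hJmem t).1 htJ
      obtain ⟨hlo, hhi⟩ := hAwin t ⟨htJ, htW⟩
      have hmem : g t ∈ Set.Ioo (1 / 2 : ℝ) (2 / 3) := ⟨by nlinarith, by nlinarith⟩
      have hcont : ContinuousAt g t := (hdiff t ht01).continuousAt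
      have hev : g ⁻¹' Set.Ioo (1 / 2 : ℝ) (2 / 3) ∈ nhds t :=
        hcont (isOpen_Ioo.mem_nhds hmem)
      obtain ⟨ε, hεpos, hεball⟩ := Metric.mem_nhds_iff.mp hev
      refine ⟨ε, hεpos, fun _ => ?_⟩
      rintro s ⟨hsball, hsJ⟩
      refine ⟨hsJ, ?_⟩
      intro x hx
      rcases Set.uIcc_subset_uIcc_union_uIcc (b := t) hx with hx1 | hx2
      · exact htW hx1
      · have hxball : x ∈ Metric.ball t ε := by
          rw [Metric.mem_ball, Real.dist_eq]
          have h1 : |x - t| ≤ |s - t| := Set.abs_sub_left_of_mem_uIcc hx2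
          have h2 : |s - t| < ε := by
            rw [Metric.mem_ball, Real.dist_eq] at hsball; exact hsball
          linarith
        have := hεball hxball
        rw [Set.mem_preimage] at this ⊢
        exact ⟨this.1.le, this.2.le⟩
    · exact ⟨1, one_pos, fun hc => absurd hc htA⟩
  choose ε hεpos hεsub using hopen
  -- preconnectedness argument
  intro θ hθ01 hθδ
  have hθJ : θ ∈ J := (hJmem θ).2 ⟨hθ01, hθδ⟩
  suffices hθA : θ ∈ A by exact hθA.2 Set.right_mem_uIcc
  by_contra hθA
  have hJconn : IsPreconnected J := by
    rw [hJdef, Set.Icc_inter_Icc]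
    exact isPreconnected_Icc
  set u : Set ℝ := ⋃ t ∈ A, Metric.ball t (ε t) with hudef
  have huopen : IsOpen u := isOpen_biUnion fun t _ => Metric.isOpen_ball
  have hAu : A ⊆ u := fun t ht =>
    Set.mem_biUnion ht (Metric.mem_ball_self (hεpos t))
  have hJuA : J ∩ u ⊆ A := by
    rintro x ⟨hxJ, hxu⟩
    obtain ⟨t, htA, hxball⟩ := Set.mem_iUnion₂.mp hxu
    exact hεsub t htA ⟨hxball, hxJ⟩
  have hcover : J ⊆ u ∪ Aᶜ := by
    intro x hxJ
    by_cases hxA : x ∈ A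
    · exact Or.inl (hAu hxA)
    · exact Or.inr hxA
  have hne1 : (J ∩ u).Nonempty := ⟨θstar, hθstarJ, hAu hθstarA⟩
  have hne2 : (J ∩ Aᶜ).Nonempty := ⟨θ, hθJ, hθA⟩
  obtain ⟨x, hxJ, hxu, hxc⟩ :=
    hJconn u Aᶜ huopen hAclosed.isOpen_compl hcover hne1 hne2
  exact hxc (hJuA ⟨hxJ, hxu⟩)
end

section
/- Let f have L_p-Lipschitz p-th derivative and x* = argmin f. If z minimizes w ↦ f_p(x̃+w, x̃) + (L_p/p!)‖w‖^{p+1}, then f(x̃ + z) + (L_p p/(p+1)!)‖z‖^{p+1} ≤ f(x̃), and consequently ‖z‖^{p+1} ≤ ((p+1)!/(L_p p)) (f(x̃) − f(x*)). -/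
/-!
Along the segment `t ↦ x̃ + t • z` the functions `g k t = D^k f (x̃ + t • z) (z, …, z)` are
successive derivatives of each other, and `g p` is `L ‖z‖^(p+1)`-Lipschitz in `t`. Integrating
this bound `p` times (each time by a fencing argument from `g k 0 = D^k f x̃ (z, …, z)`) gives
`|f (x̃ + z) - f_p z| ≤ L ‖z‖^(p+1) / (p+1)!`. Since `z` does at least as well as `w = 0`, where
the model equals `f x̃`, and `L / p! - L / (p+1)! = L p / (p+1)!`, the decrease follows; the bound
on `‖z‖^(p+1)` then comes from `f x* ≤ f (x̃ + z)`.
-/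

open Finset Nat

section OneVariable

variable {E : Type*} [NormedAddCommGroup E] [NormedSpace ℝ E]

theorem hasDerivAt_sum_pow_div_factorial_smul (c : ℕ → E) (n : ℕ) (t : ℝ) :
    HasDerivAt (fun s : ℝ => ∑ i ∈ range (n + 1), (s ^ i / i !) • c i)
      (∑ i ∈ range n, (t ^ i / i !) • c (i + 1)) t := by
  induction n with
  | zero => simpa using hasDerivAt_const t (c 0)
  | succ n ih =>
    simp only [sum_range_succ _ (n + 1)]
    rw [sum_range_succ _ n]
    refine ih.fun_add (((hasDerivAt_pow (n + 1) t).div_const ((n + 1)! : ℝ)).smul_const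
      (c (n + 1)) |>.congr_deriv ?_)
    congr 1
    rw [Nat.add_sub_cancel, factorial_succ, cast_mul]
    field_simp

theorem norm_sub_sum_pow_div_factorial_smul_le {g : ℕ → ℝ → E} {n : ℕ} {M : ℝ}
    (hg : ∀ k < n, ∀ t, HasDerivAt (g k) (g (k + 1) t) t)
    (hM : ∀ t, 0 ≤ t → ‖g n t - g n 0‖ ≤ M * t) {t : ℝ} (ht : 0 ≤ t) :
    ‖g 0 t - ∑ i ∈ range (n + 1), (t ^ i / i !) • g i 0‖ ≤
      M * t ^ (n + 1) / (n + 1)! := by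
  induction n generalizing g t with
  | zero => simpa using hM t ht
  | succ n ih =>
    have hderiv_bound : ∀ s, 0 ≤ s →
        ‖g 1 s - ∑ i ∈ range (n + 1), (s ^ i / i !) • g (i + 1) 0‖ ≤
          M * s ^ (n + 1) / (n + 1)! :=
      fun s hs => ih (g := fun k => g (k + 1)) (fun k hk => hg (k + 1) (by omega)) hM hs
    have hF : ∀ s, HasDerivAt (fun s => g 0 s - ∑ i ∈ range (n + 2), (s ^ i / i !) • g i 0)
        (g 1 s - ∑ i ∈ range (n + 1), (s ^ i / i !) • g (i + 1) 0) s :=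
      fun s => (hg 0 (by omega) s).sub (hasDerivAt_sum_pow_div_factorial_smul _ _ s)
    have hB : ∀ s, HasDerivAt (fun s => M * s ^ (n + 2) / (n + 2)!)
        (M * s ^ (n + 1) / (n + 1)!) s := by
      intro s
      refine (((hasDerivAt_pow (n + 2) s).const_mul M).div_const ((n + 2)! : ℝ)).congr_deriv ?_
      rw [show n + 2 - 1 = n + 1 by omega, factorial_succ (n + 1), cast_mul]
      field_simp
    refine image_norm_le_of_norm_deriv_right_le_deriv_boundary (a := 0)
      (fun s _ => (hF s).continuousAt.continuousWithinAt) (fun s _ => (hF s).hasDerivWithinAt)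
      (by simp [sum_range_succ']) hB (fun s hs => hderiv_bound s hs.1) ⟨ht, le_rfl⟩

end OneVariable

section Taylor

variable {E F : Type*} [NormedAddCommGroup E] [NormedSpace ℝ E]
  [NormedAddCommGroup F] [NormedSpace ℝ F]

theorem hasDerivAt_iteratedFDeriv_add_smul {f : E → F} {n k : ℕ} (hf : ContDiff ℝ n f)
    (hk : k < n) (x y : E) (t : ℝ) :
    HasDerivAt (fun s : ℝ => iteratedFDeriv ℝ k f (x + s • y) (fun _ => y))
      (iteratedFDeriv ℝ (k + 1) f (x + t • y) (fun _ => y)) t := by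
  have hdiff := hf.differentiable_iteratedFDeriv (m := k) (mod_cast hk)
  have hline :
      DifferentiableAt ℝ (fun s : ℝ => iteratedFDeriv ℝ k f (x + s • y) (fun _ => y)) t :=
    ((hdiff _).comp t (by fun_prop)).continuousMultilinear_apply_const _
  rw [← (hf.contDiffAt.of_le (mod_cast hk)).deriv_fderiv_add_smul]
  exact hline.hasDerivAt

theorem norm_sub_taylor_le_of_lipschitz_iteratedFDeriv {f : E → F} {n : ℕ} {L : ℝ}
    (hf : ContDiff ℝ n f)
    (hLip : ∀ u v, ‖iteratedFDeriv ℝ n f u - iteratedFDeriv ℝ n f v‖ ≤ L * ‖u - v‖) (x y : E) :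
    ‖f (x + y) - ∑ i ∈ range (n + 1), (i ! : ℝ)⁻¹ • iteratedFDeriv ℝ i f x (fun _ => y)‖ ≤
      L * ‖y‖ ^ (n + 1) / (n + 1)! := by
  have hM : ∀ t : ℝ, 0 ≤ t → ‖iteratedFDeriv ℝ n f (x + t • y) (fun _ => y) -
      iteratedFDeriv ℝ n f (x + (0 : ℝ) • y) (fun _ => y)‖ ≤ L * ‖y‖ ^ (n + 1) * t := by
    intro t ht
    calc _ = ‖(iteratedFDeriv ℝ n f (x + t • y) -
            iteratedFDeriv ℝ n f (x + (0 : ℝ) • y)) (fun _ => y)‖ := rfl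
      _ ≤ L * ‖(x + t • y) - (x + (0 : ℝ) • y)‖ * ∏ _ : Fin n, ‖y‖ :=
          ((ContinuousMultilinearMap.le_opNorm _ _).trans
            (mul_le_mul_of_nonneg_right (hLip _ _) (by positivity)))
      _ = L * ‖y‖ ^ (n + 1) * t := by
          simp only [zero_smul, add_zero, add_sub_cancel_left, norm_smul, Real.norm_eq_abs,
            abs_of_nonneg ht, prod_const, Finset.card_univ, Fintype.card_fin]
          ring
  simpa using norm_sub_sum_pow_div_factorial_smul_le
    (g := fun k t => iteratedFDeriv ℝ k f (x + t • y) (fun _ => y))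
    (fun k hk t => hasDerivAt_iteratedFDeriv_add_smul hf hk x y t) hM zero_le_one

theorem sum_iteratedFDeriv_zero (f : E → F) (x : E) (n : ℕ) :
    ∑ i ∈ range (n + 1), (i ! : ℝ)⁻¹ • iteratedFDeriv ℝ i f x (fun _ => 0) = f x := by
  simp [sum_range_succ', ← Pi.zero_def]

end Taylor

/-- If `z` minimizes `w ↦ f_p(x̃+w, x̃) + (L/p!)‖w‖^{p+1}`, then
`f(x̃+z) + (L p/(p+1)!)‖z‖^{p+1} ≤ f(x̃)` and
`‖z‖^{p+1} ≤ ((p+1)!/(L p)) (f(x̃) - f(x*))`. -/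
theorem taylor_min_decrease (d p : ℕ) (hp : 1 ≤ p) (L : ℝ) (hL : 0 < L)
    (f : EuclideanSpace ℝ (Fin d) → ℝ) (hf : ContDiff ℝ p f)
    (hLip : ∀ u v, ‖iteratedFDeriv ℝ p f u - iteratedFDeriv ℝ p f v‖ ≤ L * ‖u - v‖)
    (xt xs : EuclideanSpace ℝ (Fin d)) (hxs : ∀ w, f xs ≤ f w)
    (z : EuclideanSpace ℝ (Fin d))
    (fp : EuclideanSpace ℝ (Fin d) → ℝ)
    (hfp : ∀ w, fp w = ∑ i ∈ Finset.range (p + 1),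
      (1 / (Nat.factorial i : ℝ)) * iteratedFDeriv ℝ i f xt (fun _ => w))
    (hz : ∀ w, fp z + (L / (Nat.factorial p : ℝ)) * ‖z‖ ^ (p + 1) ≤
      fp w + (L / (Nat.factorial p : ℝ)) * ‖w‖ ^ (p + 1)) :
    f (xt + z) + (L * p / (Nat.factorial (p + 1) : ℝ)) * ‖z‖ ^ (p + 1) ≤ f xt ∧
      ‖z‖ ^ (p + 1) ≤ ((Nat.factorial (p + 1) : ℝ) / (L * p)) * (f xt - f xs) := by
  have hfp_smul : ∀ w,
      fp w = ∑ i ∈ range (p + 1), (i ! : ℝ)⁻¹ • iteratedFDeriv ℝ i f xt (fun _ => w) := by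
    simp [hfp]
  have htaylor : f (xt + z) ≤ fp z + L / (p + 1)! * ‖z‖ ^ (p + 1) := by
    have h := norm_sub_taylor_le_of_lipschitz_iteratedFDeriv hf hLip xt z
    rw [← hfp_smul, Real.norm_eq_abs, abs_le, ← div_mul_eq_mul_div] at h
    linarith [h.2]
  have hfp_zero : fp 0 = f xt := by
    rw [hfp_smul]
    exact sum_iteratedFDeriv_zero f xt p
  have hmodel : fp z + L / (p ! : ℝ) * ‖z‖ ^ (p + 1) ≤ f xt := by
    simpa [hfp_zero] using hz 0
  have hcoeff : L / (p ! : ℝ) - L / (p + 1)! = L * p / (p + 1)! := by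
    rw [factorial_succ, cast_mul]
    field_simp
    push_cast
    ring
  have hdecrease : f (xt + z) + L * p / (p + 1)! * ‖z‖ ^ (p + 1) ≤ f xt := by
    rw [← hcoeff, sub_mul]
    linarith
  refine ⟨hdecrease, ?_⟩
  have hc : 0 < L * p / (p + 1)! := by
    have : (0 : ℝ) < p := by exact_mod_cast hp
    positivity
  rw [← inv_div, le_inv_mul_iff₀ hc]
  linarith [hxs (xt + z)]
end

section
/- Combining the Monteiro–Svaiter bound Σ_{i=1}^k A_i / λ_i^{(p+1)/(p−1)} ≤ C_p ‖x*‖² (with C_p = 8 (L_p/(p−1)!)^{2/(p−1)}), the reverse Hölder inequality, and sqrt(A_k) ≥ (1/2) Σ_{j≤k} sqrt(λ_j), one obtains: if positive sequences (A_k), (λ_k) satisfy these conditions, then A_k ≥ (1/4) (C_p‖x*‖²)^{−(p−1)/(p+1)} (Σ_{j=1}^k A_j^{(p−1)/(3p+1)})^{(3p+1)/(p+1)} for all k. -/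
/-!
With `u = 1/(1+2α)` and `v = 2α/(1+2α)` one has `αu = v/2`, hence
`A_i^u = (A_i/λ_i^α)^u (√λ_i)^v`. Hölder's inequality with the conjugate exponents `1/u, 1/v`
gives `∑ A_i^u ≤ (∑ A_i/λ_i^α)^u (∑ √λ_i)^v ≤ M^u (2√A_k)^v`, and raising this to the power
`2/v` isolates `A_k`. The theorem is the case `α = (p+1)/(p-1)`.
-/

open Real Finset

theorem Real.sum_rpow_mul_rpow_le_of_add_eq_one {ι : Type*} (s : Finset ι) {f g : ι → ℝ}
    {u v : ℝ} (hu : 0 < u) (hv : 0 < v) (huv : u + v = 1)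
    (hf : ∀ i ∈ s, 0 ≤ f i) (hg : ∀ i ∈ s, 0 ≤ g i) :
    ∑ i ∈ s, f i ^ u * g i ^ v ≤ (∑ i ∈ s, f i) ^ u * (∑ i ∈ s, g i) ^ v := by
  have H := inner_le_Lp_mul_Lq_of_nonneg s (HolderConjugate.inv_inv hu hv huv)
    (fun i hi => rpow_nonneg (hf i hi) u) (fun i hi => rpow_nonneg (hg i hi) v)
  simp only [one_div, inv_inv] at H
  rwa [sum_congr rfl fun i hi => rpow_rpow_inv (hf i hi) hu.ne',
    sum_congr rfl fun i hi => rpow_rpow_inv (hg i hi) hv.ne'] at H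

theorem Real.sum_rpow_le_sum_div_rpow_mul_sum_sqrt {ι : Type*} (s : Finset ι) {A lam : ι → ℝ}
    {α : ℝ} (hα : 0 < α) (hA : ∀ i ∈ s, 0 ≤ A i) (hlam : ∀ i ∈ s, 0 < lam i) :
    ∑ i ∈ s, A i ^ (1 + 2 * α)⁻¹ ≤
      (∑ i ∈ s, A i / lam i ^ α) ^ (1 + 2 * α)⁻¹ *
        (∑ i ∈ s, √(lam i)) ^ (2 * α / (1 + 2 * α)) := by
  have hβ : 0 < 1 + 2 * α := by linarith
  have hsplit : ∀ i ∈ s, A i ^ (1 + 2 * α)⁻¹ =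
      (A i / lam i ^ α) ^ (1 + 2 * α)⁻¹ * √(lam i) ^ (2 * α / (1 + 2 * α)) := by
    intro i hi
    have hl := hlam i hi
    rw [div_rpow (hA i hi) (rpow_nonneg hl.le α), sqrt_eq_rpow, ← rpow_mul hl.le,
      ← rpow_mul hl.le, show α * (1 + 2 * α)⁻¹ = 1 / 2 * (2 * α / (1 + 2 * α)) by ring,
      div_mul_cancel₀ _ (rpow_pos_of_pos hl _).ne']
  rw [sum_congr rfl hsplit]
  exact sum_rpow_mul_rpow_le_of_add_eq_one s (inv_pos.2 hβ) (by positivity)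
    (by field_simp) (fun i hi => div_nonneg (hA i hi) (rpow_nonneg (hlam i hi).le α))
    (fun i _ => sqrt_nonneg _)

theorem Real.le_of_sum_div_rpow_le_of_sum_sqrt_le {ι : Type*} (s : Finset ι) {A lam : ι → ℝ}
    {α M a : ℝ} (hα : 0 < α) (hA : ∀ i ∈ s, 0 ≤ A i) (hlam : ∀ i ∈ s, 0 < lam i)
    (hM : 0 < M) (ha : 0 ≤ a) (hdiv : ∑ i ∈ s, A i / lam i ^ α ≤ M)
    (hsqrt : ∑ i ∈ s, √(lam i) ≤ 2 * √a) :
    1 / 4 * M ^ (-α⁻¹) * (∑ i ∈ s, A i ^ (1 + 2 * α)⁻¹) ^ ((1 + 2 * α) / α) ≤ a := by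
  have hS : ∑ i ∈ s, A i ^ (1 + 2 * α)⁻¹ ≤
      M ^ (1 + 2 * α)⁻¹ * (2 * √a) ^ (2 * α / (1 + 2 * α)) := by
    refine (sum_rpow_le_sum_div_rpow_mul_sum_sqrt s hα hA hlam).trans ?_
    gcongr
    exact sum_nonneg fun i hi => div_nonneg (hA i hi) (rpow_nonneg (hlam i hi).le α)
  have hSw : (∑ i ∈ s, A i ^ (1 + 2 * α)⁻¹) ^ ((1 + 2 * α) / α) ≤ M ^ α⁻¹ * (4 * a) :=
    calc _ ≤ (M ^ (1 + 2 * α)⁻¹ * (2 * √a) ^ (2 * α / (1 + 2 * α))) ^ ((1 + 2 * α) / α) := by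
          gcongr
          exact sum_nonneg fun i hi => rpow_nonneg (hA i hi) _
      _ = M ^ α⁻¹ * (2 * √a) ^ (2 : ℝ) := by
          rw [mul_rpow (by positivity) (by positivity), ← rpow_mul hM.le,
            ← rpow_mul (by positivity)]
          congr 2 <;> field_simp
      _ = M ^ α⁻¹ * (4 * a) := by
          rw [rpow_two, mul_pow, sq_sqrt ha]; ring
  calc 1 / 4 * M ^ (-α⁻¹) * (∑ i ∈ s, A i ^ (1 + 2 * α)⁻¹) ^ ((1 + 2 * α) / α)
      ≤ 1 / 4 * M ^ (-α⁻¹) * (M ^ α⁻¹ * (4 * a)) := by gcongr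
    _ = a := by
      rw [rpow_neg hM.le]
      field_simp [(rpow_pos_of_pos hM α⁻¹).ne']

theorem key_recursion_general (d p : ℕ) (hp : 2 ≤ p)
    (xs : EuclideanSpace ℝ (Fin d))
    (Cp : ℝ)
    (A lam : ℕ → ℝ)
    (hApos : ∀ k, 1 ≤ k → 0 < A k) (hlampos : ∀ k, 1 ≤ k → 0 < lam k)
    (hMS : ∀ k, 1 ≤ k →
      ∑ i ∈ Finset.Icc 1 k, A i / (lam i) ^ (((p : ℝ) + 1) / (p - 1)) ≤ Cp * ‖xs‖ ^ 2)
    (hsqrt : ∀ k, 1 ≤ k →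
      Real.sqrt (A k) ≥ (1 / 2) * ∑ j ∈ Finset.Icc 1 k, Real.sqrt (lam j)) :
    ∀ k, 1 ≤ k →
      A k ≥ (1 / 4) * (Cp * ‖xs‖ ^ 2) ^ (-(((p : ℝ) - 1) / (p + 1))) *
        (∑ j ∈ Finset.Icc 1 k, (A j) ^ (((p : ℝ) - 1) / (3 * p + 1))) ^
          ((3 * (p : ℝ) + 1) / (p + 1)) := by
  intro k hk
  have hp' : (2 : ℝ) ≤ p := by exact_mod_cast hp
  have hα : 0 < ((p : ℝ) + 1) / (p - 1) := div_pos (by linarith) (by linarith)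
  have hM : 0 < Cp * ‖xs‖ ^ 2 :=
    (div_pos (hApos 1 le_rfl) (rpow_pos_of_pos (hlampos 1 le_rfl) _)).trans_le
      (by simpa using hMS 1 le_rfl)
  have key := le_of_sum_div_rpow_le_of_sum_sqrt_le (Icc 1 k) hα
    (fun i hi => (hApos i (mem_Icc.1 hi).1).le) (fun i hi => hlampos i (mem_Icc.1 hi).1)
    hM (hApos k hk).le (hMS k hk) (by linarith [hsqrt k hk])
  have hp1 : (p : ℝ) - 1 ≠ 0 := by linarith
  have hβ : 1 + 2 * (((p : ℝ) + 1) / (p - 1)) = (3 * p + 1) / (p - 1) := by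
    field_simp; ring
  rwa [hβ, inv_div, inv_div, div_div_div_cancel_right₀ hp1] at key

/-- Key recursion: combining `∑ A i / λ i^{(p+1)/(p-1)} ≤ C_p ‖x*‖²`, reverse Hölder,
and `sqrt (A k) ≥ (1/2) ∑ sqrt (λ j)` yields a lower bound on `A k`. -/
theorem key_recursion (d p : ℕ) (hp : 2 ≤ p) (L : ℝ) (hL : 0 < L)
    (xs : EuclideanSpace ℝ (Fin d)) (hxs : 0 < ‖xs‖)
    (Cp : ℝ) (hCp : Cp = 8 * (L / (Nat.factorial (p - 1) : ℝ)) ^ ((2 : ℝ) / (p - 1)))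
    (A lam : ℕ → ℝ)
    (hApos : ∀ k, 1 ≤ k → 0 < A k) (hlampos : ∀ k, 1 ≤ k → 0 < lam k)
    (hAmono : ∀ j k, 1 ≤ j → j ≤ k → A j ≤ A k)
    (hMS : ∀ k, 1 ≤ k →
      ∑ i ∈ Finset.Icc 1 k, A i / (lam i) ^ (((p : ℝ) + 1) / (p - 1)) ≤ Cp * ‖xs‖ ^ 2)
    (hsqrt : ∀ k, 1 ≤ k →
      Real.sqrt (A k) ≥ (1 / 2) * ∑ j ∈ Finset.Icc 1 k, Real.sqrt (lam j)) :
    ∀ k, 1 ≤ k →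
      A k ≥ (1 / 4) * (Cp * ‖xs‖ ^ 2) ^ (-(((p : ℝ) - 1) / (p + 1))) *
        (∑ j ∈ Finset.Icc 1 k, (A j) ^ (((p : ℝ) - 1) / (3 * p + 1))) ^
          ((3 * (p : ℝ) + 1) / (p + 1)) :=
  key_recursion_general d p hp xs Cp A lam hApos hlampos hMS hsqrt
end

section
/- Let p ≥ 2 and suppose a positive non-decreasing sequence (A_k) satisfies A_k ≥ c' (Σ_{j=1}^k A_j^{(p−1)/(3p+1)})^{(3p+1)/(p+1)} for all k ≥ 1, with c' > 0. Then A_k ≥ (2/(p+1) · c'^{(p+1)/(3p+1)} · k)^{(3p+1)/2} for all k ≥ 1. -/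
/-!
Write `S k = ∑_{j ≤ k} B j` and `γ = 1 - 1/α`. The hypothesis gives `B k ≥ (c S k)^{1/α}`, and the
tangent line of the concave function `s ↦ s^γ` at `S k` gives
`S k^γ - S (k-1)^γ ≥ γ S k^{γ-1} B k ≥ γ c^{1/α}`; telescoping from `S 0 = 0` yields
`S k^γ ≥ γ c^{1/α} k`, and then `B k^{α-1} = (B k^α)^γ ≥ (c S k)^γ ≥ γ c k`.
The theorem is the case `B k = A k^{(p-1)/(3p+1)}`, `α = (p+1)/(p-1)`, `c = c'^{(p+1)/(3p+1)}`.
-/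

open Real Finset

lemma mul_rpow_sub_one_mul_sub_le_rpow_sub_rpow {γ x y : ℝ} (hγ₀ : 0 ≤ γ) (hγ₁ : γ ≤ 1)
    (hx : 0 ≤ x) (hy : 0 < y) : γ * y ^ (γ - 1) * (y - x) ≤ y ^ γ - x ^ γ := by
  have hbernoulli := rpow_one_add_le_one_add_mul_self (s := x / y - 1)
    (by linarith [div_nonneg hx hy.le]) hγ₀ hγ₁
  rw [add_sub_cancel, div_rpow hx hy.le, div_le_iff₀ (rpow_pos_of_pos hy γ)] at hbernoulli
  rw [rpow_sub_one hy.ne']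
  calc γ * (y ^ γ / y) * (y - x) = y ^ γ - (1 + γ * (x / y - 1)) * y ^ γ := by
        field_simp; ring
    _ ≤ y ^ γ - x ^ γ := by linarith

lemma mul_rpow_inv_le_rpow_add_sub_rpow {α c s b : ℝ} (hα : 1 < α) (hc : 0 < c)
    (hs : 0 ≤ s) (hb : 0 < b) (h : c * (s + b) ≤ b ^ α) :
    (1 - α⁻¹) * c ^ α⁻¹ ≤ (s + b) ^ (1 - α⁻¹) - s ^ (1 - α⁻¹) := by
  have hα₀ : 0 < α := by linarith
  have hγ : 0 ≤ 1 - α⁻¹ := by simp [inv_le_one_of_one_le₀ hα.le]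
  have hsb : 0 < s + b := by linarith
  have hroot : c ^ α⁻¹ * (s + b) ^ α⁻¹ ≤ b := by
    rwa [← mul_rpow hc.le hsb.le, rpow_inv_le_iff_of_pos (by positivity) hb.le hα₀]
  have htangent := mul_rpow_sub_one_mul_sub_le_rpow_sub_rpow hγ (by simp [hα₀.le]) hs hsb
  rw [add_sub_cancel_left, sub_sub_cancel_left, rpow_neg hsb.le] at htangent
  calc (1 - α⁻¹) * c ^ α⁻¹ ≤ (1 - α⁻¹) * ((s + b) ^ α⁻¹)⁻¹ * b := by
        rw [mul_assoc]
        gcongr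
        rwa [inv_mul_eq_div, le_div_iff₀ (by positivity)]
    _ ≤ _ := htangent

lemma mul_natCast_le_sum_rpow {α c : ℝ} (hα : 1 < α) (hc : 0 < c) {B : ℕ → ℝ}
    (hB : ∀ k, 1 ≤ k → 0 < B k) (hrec : ∀ k, 1 ≤ k → c * ∑ j ∈ Icc 1 k, B j ≤ B k ^ α)
    (k : ℕ) :
    (1 - α⁻¹) * c ^ α⁻¹ * k ≤ (∑ j ∈ Icc 1 k, B j) ^ (1 - α⁻¹) := by
  induction k with
  | zero => simpa using rpow_nonneg le_rfl (1 - α⁻¹)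
  | succ k ih =>
    have hsum : ∑ j ∈ Icc 1 (k + 1), B j = ∑ j ∈ Icc 1 k, B j + B (k + 1) :=
      sum_Icc_succ_top (by omega) B
    have hstep := mul_rpow_inv_le_rpow_add_sub_rpow hα hc
      (sum_nonneg fun j hj => (hB j (mem_Icc.mp hj).1).le) (hB (k + 1) (by omega))
      (hsum ▸ hrec (k + 1) (by omega))
    rw [hsum]
    push_cast
    linarith

lemma rpow_inv_le_of_mul_sum_le_rpow {α c : ℝ} (hα : 1 < α) (hc : 0 < c) {B : ℕ → ℝ}
    (hB : ∀ k, 1 ≤ k → 0 < B k) (hrec : ∀ k, 1 ≤ k → c * ∑ j ∈ Icc 1 k, B j ≤ B k ^ α)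
    (k : ℕ) (hk : 1 ≤ k) :
    ((α - 1) / α * c * k) ^ (α - 1)⁻¹ ≤ B k := by
  have hα₀ : 0 < α := by linarith
  have hγ : 0 ≤ 1 - α⁻¹ := by simp [inv_le_one_of_one_le₀ hα.le]
  have hS : 0 ≤ ∑ j ∈ Icc 1 k, B j := sum_nonneg fun j hj => (hB j (mem_Icc.mp hj).1).le
  have hBk := hB k hk
  have hsum := mul_natCast_le_sum_rpow hα hc hB hrec k
  have hc_split : c ^ (1 - α⁻¹) * c ^ α⁻¹ = c := by
    rw [← rpow_add hc, sub_add_cancel, rpow_one]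
  rw [rpow_inv_le_iff_of_pos (by positivity) hBk.le (by linarith),
    show (α - 1) / α = 1 - α⁻¹ by field_simp]
  calc (1 - α⁻¹) * c * k = c ^ (1 - α⁻¹) * ((1 - α⁻¹) * c ^ α⁻¹ * k) := by
        linear_combination (-(1 - α⁻¹) * k) * hc_split
    _ ≤ c ^ (1 - α⁻¹) * (∑ j ∈ Icc 1 k, B j) ^ (1 - α⁻¹) := by gcongr
    _ = (c * ∑ j ∈ Icc 1 k, B j) ^ (1 - α⁻¹) := (mul_rpow hc.le hS).symm
    _ ≤ (B k ^ α) ^ (1 - α⁻¹) := by gcongr; exact hrec k hk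
    _ = B k ^ (α - 1) := by
        rw [← rpow_mul hBk.le, mul_sub, mul_inv_cancel₀ hα₀.ne', mul_one]

lemma rpow_inv_mul_le_rpow_inv_of_mul_rpow_le {a s y e : ℝ} (ha : 0 ≤ a) (hs : 0 ≤ s)
    (he : 0 < e) (h : a * s ^ e ≤ y) : a ^ e⁻¹ * s ≤ y ^ e⁻¹ := by
  have hy : 0 ≤ y := (by positivity : 0 ≤ a * s ^ e).trans h
  rwa [le_rpow_inv_iff_of_pos (by positivity) hy he, mul_rpow (by positivity) hs,
    ← rpow_mul ha, inv_mul_cancel₀ he.ne', rpow_one]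

theorem A_growth_general (p : ℕ) (hp : 2 ≤ p) (c' : ℝ) (hc' : 0 < c') (A : ℕ → ℝ)
    (hApos : ∀ k, 1 ≤ k → 0 < A k)
    (hrec : ∀ k, 1 ≤ k →
      A k ≥ c' * (∑ j ∈ Finset.Icc 1 k, (A j) ^ (((p : ℝ) - 1) / (3 * p + 1))) ^
        ((3 * (p : ℝ) + 1) / (p + 1))) :
    ∀ k : ℕ, 1 ≤ k →
      A k ≥ (2 / ((p : ℝ) + 1) * c' ^ (((p : ℝ) + 1) / (3 * p + 1)) * k) ^
        ((3 * (p : ℝ) + 1) / 2) := by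
  intro k hk
  have hp₁ : (1 : ℝ) < p := by exact_mod_cast hp
  have hp₁' : (p : ℝ) - 1 ≠ 0 := (sub_pos.2 hp₁).ne'
  set c := c' ^ (((p : ℝ) + 1) / (3 * p + 1))
  set α : ℝ := (p + 1) / (p - 1) with hα
  set B : ℕ → ℝ := fun j => A j ^ (((p : ℝ) - 1) / (3 * p + 1))
  have hB : ∀ j, 1 ≤ j → 0 < B j := fun j hj => rpow_pos_of_pos (hApos j hj) _
  have hBrec : ∀ j, 1 ≤ j → c * ∑ i ∈ Icc 1 j, B i ≤ B j ^ α := by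
    intro j hj
    have h := rpow_inv_mul_le_rpow_inv_of_mul_rpow_le hc'.le
      (sum_nonneg fun i hi => (hB i (mem_Icc.mp hi).1).le) (by positivity) (hrec j hj)
    rw [inv_div] at h
    rw [← rpow_mul (hApos j hj).le]
    convert h using 2
    rw [hα]; field_simp
  have hgrowth := rpow_inv_le_of_mul_sum_le_rpow
    ((one_lt_div (sub_pos.2 hp₁)).2 (by linarith)) (by positivity) hB hBrec k hk
  rw [show (α - 1) / α = 2 / ((p : ℝ) + 1) by rw [hα]; field_simp; ring,
    show (α - 1)⁻¹ = ((p : ℝ) - 1) / 2 by rw [hα]; field_simp; ring] at hgrowth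
  set x := 2 / ((p : ℝ) + 1) * c * k
  calc x ^ ((3 * (p : ℝ) + 1) / 2)
        = (x ^ (((p : ℝ) - 1) / 2)) ^ ((3 * (p : ℝ) + 1) / (p - 1)) := by
        rw [← rpow_mul (by positivity)]
        congr 1
        field_simp
    _ ≤ B k ^ ((3 * (p : ℝ) + 1) / (p - 1)) := by gcongr
    _ = A k := by
        rw [← rpow_mul (hApos k hk).le, div_mul_div_comm, mul_comm, div_self (by positivity),
          rpow_one]

/-- If a positive non-decreasing sequence satisfies
`A k ≥ c' (∑_{j≤k} A j^{(p-1)/(3p+1)})^{(3p+1)/(p+1)}`, then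
`A k ≥ (2/(p+1) · c'^{(p+1)/(3p+1)} · k)^{(3p+1)/2}`. -/
theorem A_growth (p : ℕ) (hp : 2 ≤ p) (c' : ℝ) (hc' : 0 < c') (A : ℕ → ℝ)
    (hApos : ∀ k, 1 ≤ k → 0 < A k)
    (hAmono : ∀ j k, 1 ≤ j → j ≤ k → A j ≤ A k)
    (hrec : ∀ k, 1 ≤ k →
      A k ≥ c' * (∑ j ∈ Finset.Icc 1 k, (A j) ^ (((p : ℝ) - 1) / (3 * p + 1))) ^
        ((3 * (p : ℝ) + 1) / (p + 1))) :
    ∀ k : ℕ, 1 ≤ k →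
      A k ≥ (2 / ((p : ℝ) + 1) * c' ^ (((p : ℝ) + 1) / (3 * p + 1)) * k) ^
        ((3 * (p : ℝ) + 1) / 2) :=
  A_growth_general p hp c' hc' A hApos hrec
end
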